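/- arXiv:2309.14252 — 7 statements merged into one kernel-verified Lean document; each statement's English description precedes it below -/
import Mathlib

section
/- Let 1 < p < ∞ with conjugate q, and let x = (x_n) be a nonzero element of ⊕_p X_n. Then the diameter of the set of support functionals satisfies D(x) = (∑_n (‖x_n‖^p/‖x‖_p^p) · D(x_n)^q)^{1/q}, where D(x_n) is the diameter of J(x_n) (taken as 0 when x_n = 0). -/
/-!
The dual of `⊕_p E_i` is `⊕_q E_i*`: a functional `h` is determined by its components
`h_i = h ∘ single i`, and `‖h‖^q = ∑ ‖h_i‖^q`. If `h` supports `x`, then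
`1 = h x / ‖x‖ ≤ ∑ aᵢ bᵢ ≤ ∑ (aᵢ^p/p + bᵢ^q/q) ≤ 1` with `aᵢ = ‖x_i‖/‖x‖`, `bᵢ = ‖h_i‖`
(Hölder's inequality via Young's), so Young's inequality is an equality termwise. Hence the support functionals
of `x` are exactly the `h` with `h_i = λ_i g_i`, where `λ_i = aᵢ^(p-1)` and `g_i` is any support
functional of `x_i`, chosen independently for each `i`. Therefore
`‖h - h'‖^q = ∑ λ_i^q ‖g_i - g'_i‖^q` with `λ_i^q = aᵢ^p`, and the diameter is the `ℓ^q`-sum of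
the weighted diameters.
-/

open scoped Classical

open scoped ENNReal

/-- The set of norm-one support functionals of an element of a normed space. -/
def suppFunctionals {X : Type*} [NormedAddCommGroup X] [NormedSpace ℝ X] (x : X) :
    Set (X →L[ℝ] ℝ) :=
  {f | ‖f‖ = 1 ∧ f x = ‖x‖}

open Filter Topology in
lemma le_of_forall_pos_lt_one_mul_le {c d : ℝ} (h : ∀ θ, 0 < θ → θ < 1 → θ * c ≤ d) :
    c ≤ d := by
  have hlim : Tendsto (fun θ : ℝ => θ * c) (𝓝[<] 1) (𝓝 c) := by
    simpa using ((continuous_mul_const c).tendsto 1).mono_left nhdsWithin_le_nhds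
  refine le_of_tendsto hlim ?_
  filter_upwards [Ioo_mem_nhdsLT zero_lt_one] with θ hθ using h θ hθ.1 hθ.2

lemma HasSum.eq_of_le {ι : Type*} {f g : ι → ℝ} {a : ℝ} (hf : HasSum f a) (hg : HasSum g a)
    (hle : f ≤ g) : f = g := by
  by_contra hne
  obtain ⟨i, hi⟩ := Function.ne_iff.mp hne
  exact (hasSum_lt hle ((hle i).lt_of_ne hi) hf hg).false

lemma ContinuousLinearMap.exists_norm_le_one_mul_norm_le_apply {F : Type*}
    [NormedAddCommGroup F] [NormedSpace ℝ F] (f : F →L[ℝ] ℝ) {θ : ℝ} (hθ : θ < 1) :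
    ∃ u, ‖u‖ ≤ 1 ∧ θ * ‖f‖ ≤ f u := by
  rcases lt_or_ge (θ * ‖f‖) ‖f‖ with hlt | hge
  · obtain ⟨u, hu, hfu⟩ := f.exists_lt_apply_of_lt_opNorm hlt
    rcases le_total 0 (f u) with hpos | hneg
    · rw [Real.norm_eq_abs, abs_of_nonneg hpos] at hfu
      exact ⟨u, hu.le, hfu.le⟩
    · refine ⟨-u, by rw [norm_neg]; exact hu.le, ?_⟩
      rw [Real.norm_eq_abs, abs_of_nonpos hneg] at hfu
      simpa using hfu.le
  · have : ‖f‖ = 0 := by nlinarith [norm_nonneg f]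
    exact ⟨0, by simp, by simp [this]⟩

lemma Real.sum_rpow_le_of_forall_sum_mul_le {ι : Type*} {p q : ℝ} (hpq : p.HolderConjugate q)
    {s : Finset ι} {a : ι → ℝ} (ha : ∀ i, 0 ≤ a i) {M : ℝ} (hM : 0 ≤ M)
    (h : ∀ c : ι → ℝ, (∀ i, 0 ≤ c i) → ∑ i ∈ s, c i * a i ≤ M * (∑ i ∈ s, c i ^ p) ^ p⁻¹) :
    ∑ i ∈ s, a i ^ q ≤ M ^ q := by
  set A := ∑ i ∈ s, a i ^ q
  have hA : A ≤ M * A ^ p⁻¹ := by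
    have hc := h (fun i => a i ^ (q - 1)) fun i => Real.rpow_nonneg (ha i) _
    have hmul : ∀ i, a i ^ (q - 1) * a i = a i ^ q := fun i => by
      rcases (ha i).eq_or_lt with h0 | hpos
      · simp [← h0, Real.zero_rpow hpq.symm.sub_one_ne_zero, Real.zero_rpow hpq.symm.ne_zero]
      · rw [Real.rpow_sub_one hpos.ne', div_mul_cancel₀ _ hpos.ne']
    have hpow : ∀ i, (a i ^ (q - 1)) ^ p = a i ^ q := fun i => by
      rw [← Real.rpow_mul (ha i), hpq.symm.sub_one_mul_conj]
    simpa only [hmul, hpow] using hc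
  have hA0 : 0 ≤ A := Finset.sum_nonneg fun i _ => Real.rpow_nonneg (ha i) q
  rcases hA0.eq_or_lt with h0 | hpos
  · rw [← h0]; positivity
  · have : A ^ q⁻¹ ≤ M := by
      have hsplit : A = A ^ p⁻¹ * A ^ q⁻¹ := by
        rw [← Real.rpow_add hpos, hpq.inv_add_inv_eq_one, Real.rpow_one]
      have hApos : 0 < A ^ p⁻¹ := by positivity
      nlinarith
    exact (Real.rpow_inv_le_iff_of_pos hpos.le hM hpq.symm.pos).mp this

section SupportFunctionals

variable {X : Type*} [NormedAddCommGroup X] [NormedSpace ℝ X]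

lemma suppFunctionals_subset_closedBall (y : X) :
    suppFunctionals y ⊆ Metric.closedBall 0 1 :=
  fun _ hf => mem_closedBall_zero_iff.mpr hf.1.le

lemma isBounded_suppFunctionals (y : X) : Bornology.IsBounded (suppFunctionals y) :=
  Metric.isBounded_closedBall.subset (suppFunctionals_subset_closedBall y)

lemma diam_suppFunctionals_le_two (y : X) : Metric.diam (suppFunctionals y) ≤ 2 := by
  simpa using
    Metric.diam_le_of_subset_closedBall zero_le_one (suppFunctionals_subset_closedBall y)

lemma suppFunctionals_nonempty {y : X} (hy : y ≠ 0) : (suppFunctionals y).Nonempty := by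
  obtain ⟨f, hf, hfy⟩ := exists_dual_vector ℝ y (norm_ne_zero_iff.mpr hy)
  exact ⟨f, hf, by exact_mod_cast hfy⟩

lemma exists_mul_diam_le_dist_suppFunctionals {y : X} (hy : y ≠ 0) {θ : ℝ} (hθ₀ : 0 ≤ θ)
    (hθ₁ : θ < 1) : ∃ f ∈ suppFunctionals y, ∃ f' ∈ suppFunctionals y,
      θ * Metric.diam (suppFunctionals y) ≤ dist f f' := by
  rcases (Metric.diam_nonneg (s := suppFunctionals y)).eq_or_lt with hD | hD
  · obtain ⟨f, hf⟩ := suppFunctionals_nonempty hy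
    exact ⟨f, hf, f, hf, by simp [← hD]⟩
  · by_contra! hall
    have := Metric.diam_le_of_forall_dist_le (by positivity) fun f hf f' hf' =>
      (hall f hf f' hf').le
    nlinarith

lemma smul_mem_suppFunctionals_iff {y : X} {f : X →L[ℝ] ℝ} {c : ℝ} (hc : 0 < c) :
    f ∈ suppFunctionals y ↔ ‖c • f‖ = c ∧ (c • f) y = c * ‖y‖ := by
  simp [suppFunctionals, norm_smul, abs_of_pos hc, hc.ne']

end SupportFunctionals

namespace lp

variable {ι : Type*} {E : ι → Type*} [∀ i, NormedAddCommGroup (E i)]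

lemma hasSum_rpow_norm {p : ℝ} (hp : 0 < p) (f : lp E (ENNReal.ofReal p)) :
    HasSum (fun i => ‖f i‖ ^ p) (‖f‖ ^ p) := by
  have hp' : (ENNReal.ofReal p).toReal = p := ENNReal.toReal_ofReal hp.le
  simpa only [hp'] using lp.hasSum_norm (by rw [hp']; exact hp) f

section SupportWeight

variable {p q : ℝ}

noncomputable def supportWeight (x : lp E (ENNReal.ofReal p)) (i : ι) : ℝ :=
  (‖x i‖ / ‖x‖) ^ (p - 1)

lemma supportWeight_eq_zero (hp : 1 < p) {x : lp E (ENNReal.ofReal p)} {i : ι}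
    (hi : x i = 0) : supportWeight x i = 0 := by
  simp [supportWeight, hi, Real.zero_rpow (sub_pos.mpr hp).ne']

variable [Fact (1 ≤ ENNReal.ofReal p)]

lemma supportWeight_nonneg (x : lp E (ENNReal.ofReal p)) (i : ι) : 0 ≤ supportWeight x i := by
  unfold supportWeight; positivity

lemma supportWeight_pos {x : lp E (ENNReal.ofReal p)} {i : ι} (hi : x i ≠ 0) :
    0 < supportWeight x i := by
  have hx : x ≠ 0 := by rintro rfl; exact hi rfl
  have := norm_pos_iff.mpr hi
  have := norm_pos_iff.mpr hx
  unfold supportWeight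
  positivity

lemma supportWeight_rpow (hpq : p.HolderConjugate q) (x : lp E (ENNReal.ofReal p)) (i : ι) :
    supportWeight x i ^ q = (‖x i‖ / ‖x‖) ^ p := by
  rw [supportWeight, ← Real.rpow_mul (by positivity), hpq.sub_one_mul_conj]

lemma supportWeight_mul_norm (hp : p ≠ 0) {x : lp E (ENNReal.ofReal p)}
    (hx : x ≠ 0) (i : ι) : supportWeight x i * ‖x i‖ = (‖x i‖ / ‖x‖) ^ p * ‖x‖ := by
  have hX : 0 < ‖x‖ := norm_pos_iff.mpr hx
  rcases (norm_nonneg (x i)).eq_or_lt with h0 | hpos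
  · simp [supportWeight, ← h0, Real.zero_rpow hp]
  · rw [supportWeight, Real.rpow_sub_one (by positivity)]
    field_simp

lemma hasSum_rpow_norm_div {x : lp E (ENNReal.ofReal p)} (hp : 0 < p) (hx : x ≠ 0) :
    HasSum (fun i => (‖x i‖ / ‖x‖) ^ p) 1 := by
  have hX : 0 < ‖x‖ := norm_pos_iff.mpr hx
  simp only [Real.div_rpow (norm_nonneg _) hX.le]
  simpa [(Real.rpow_pos_of_pos hX p).ne'] using (hasSum_rpow_norm hp x).div_const (‖x‖ ^ p)

lemma hasSum_rpow_supportWeight (hpq : p.HolderConjugate q) {x : lp E (ENNReal.ofReal p)}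
    (hx : x ≠ 0) : HasSum (fun i => supportWeight x i ^ q) 1 := by
  simpa only [supportWeight_rpow hpq] using hasSum_rpow_norm_div hpq.pos hx

end SupportWeight

variable [∀ i, NormedSpace ℝ (E i)]

section Components

variable {p : ℝ≥0∞} [Fact (1 ≤ p)]

noncomputable def dualComponent (h : lp E p →L[ℝ] ℝ) (i : ι) : E i →L[ℝ] ℝ :=
  h.comp (lp.singleContinuousLinearMap ℝ E p i)

@[simp] lemma dualComponent_apply (h : lp E p →L[ℝ] ℝ) (i : ι) (v : E i) :
    dualComponent h i v = h (lp.single p i v) := rfl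

lemma dualComponent_sub (h h' : lp E p →L[ℝ] ℝ) (i : ι) :
    dualComponent (h - h') i = dualComponent h i - dualComponent h' i :=
  ContinuousLinearMap.sub_comp _ _ _

lemma hasSum_dualComponent (hp : p ≠ ⊤) (h : lp E p →L[ℝ] ℝ) (f : lp E p) :
    HasSum (fun i => dualComponent h i (f i)) (h f) :=
  (lp.hasSum_single hp f).mapL h

end Components

section HolderDuality

variable {p q : ℝ} [Fact (1 ≤ ENNReal.ofReal p)]

lemma summable_apply_and_abs_tsum_apply_le (hpq : p.HolderConjugate q)
    {g : ∀ i, E i →L[ℝ] ℝ} (hg : Summable fun i => ‖g i‖ ^ q) (f : lp E (ENNReal.ofReal p)) :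
    Summable (fun i => g i (f i)) ∧ |∑' i, g i (f i)| ≤ (∑' i, ‖g i‖ ^ q) ^ q⁻¹ * ‖f‖ := by
  have hf := hasSum_rpow_norm hpq.pos f
  obtain ⟨hsum, hle⟩ := Real.summable_and_inner_le_Lp_mul_Lq_tsum_of_nonneg hpq
    (fun i => norm_nonneg (f i)) (fun i => norm_nonneg (g i)) hf.summable hg
  have hbound : ∀ i, ‖g i (f i)‖ ≤ ‖f i‖ * ‖g i‖ := fun i => by
    rw [mul_comm]; exact (g i).le_opNorm (f i)
  have habs : Summable fun i => ‖g i (f i)‖ := hsum.of_nonneg_of_le (fun _ => norm_nonneg _) hbound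
  refine ⟨habs.of_norm, ?_⟩
  calc |∑' i, g i (f i)| ≤ ∑' i, ‖g i (f i)‖ := norm_tsum_le_tsum_norm habs
    _ ≤ ∑' i, ‖f i‖ * ‖g i‖ := habs.tsum_le_tsum hbound hsum
    _ ≤ (∑' i, ‖f i‖ ^ p) ^ (1 / p) * (∑' i, ‖g i‖ ^ q) ^ (1 / q) := hle
    _ = (∑' i, ‖g i‖ ^ q) ^ q⁻¹ * ‖f‖ := by
      rw [hf.tsum_eq, one_div, one_div, Real.rpow_rpow_inv (norm_nonneg f) hpq.ne_zero, mul_comm]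

lemma norm_le_tsum_rpow_norm_dualComponent (hpq : p.HolderConjugate q)
    (h : lp E (ENNReal.ofReal p) →L[ℝ] ℝ) (hs : Summable fun i => ‖dualComponent h i‖ ^ q) :
    ‖h‖ ≤ (∑' i, ‖dualComponent h i‖ ^ q) ^ q⁻¹ := by
  refine h.opNorm_le_bound (by positivity) fun f => ?_
  rw [← (hasSum_dualComponent ENNReal.ofReal_ne_top h f).tsum_eq]
  exact (summable_apply_and_abs_tsum_apply_le hpq hs f).2

lemma sum_mul_norm_dualComponent_le (hpq : p.HolderConjugate q)
    (h : lp E (ENNReal.ofReal p) →L[ℝ] ℝ) (s : Finset ι) {c : ι → ℝ} (hc : ∀ i, 0 ≤ c i) :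
    ∑ i ∈ s, c i * ‖dualComponent h i‖ ≤ ‖h‖ * (∑ i ∈ s, c i ^ p) ^ p⁻¹ := by
  have hp : (ENNReal.ofReal p).toReal = p := ENNReal.toReal_ofReal hpq.nonneg
  refine le_of_forall_pos_lt_one_mul_le fun θ _ hθ => ?_
  choose u hu1 hu using fun i => (dualComponent h i).exists_norm_le_one_mul_norm_le_apply hθ
  set y : lp E (ENNReal.ofReal p) := ∑ i ∈ s, lp.single _ i (c i • u i)
  have hy : ‖y‖ ≤ (∑ i ∈ s, c i ^ p) ^ p⁻¹ := by
    have hnorm := lp.norm_sum_single (by rw [hp]; exact hpq.pos) (fun i => c i • u i) s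
    rw [hp] at hnorm
    rw [Real.le_rpow_inv_iff_of_pos (norm_nonneg _)
      (Finset.sum_nonneg fun i _ => Real.rpow_nonneg (hc i) p) hpq.pos, hnorm]
    refine Finset.sum_le_sum fun i _ => Real.rpow_le_rpow (norm_nonneg _) ?_ hpq.nonneg
    rw [norm_smul, Real.norm_of_nonneg (hc i)]
    exact mul_le_of_le_one_right (hc i) (hu1 i)
  calc θ * ∑ i ∈ s, c i * ‖dualComponent h i‖
      = ∑ i ∈ s, c i * (θ * ‖dualComponent h i‖) := by
        rw [Finset.mul_sum]; exact Finset.sum_congr rfl fun i _ => by ring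
    _ ≤ ∑ i ∈ s, c i * dualComponent h i (u i) :=
        Finset.sum_le_sum fun i _ => mul_le_mul_of_nonneg_left (hu i) (hc i)
    _ = h y := by simp [y, map_sum, lp.single_smul]
    _ ≤ ‖h‖ * ‖y‖ := (le_abs_self _).trans (h.le_opNorm y)
    _ ≤ ‖h‖ * (∑ i ∈ s, c i ^ p) ^ p⁻¹ := by gcongr

lemma hasSum_rpow_norm_dualComponent (hpq : p.HolderConjugate q)
    (h : lp E (ENNReal.ofReal p) →L[ℝ] ℝ) :
    HasSum (fun i => ‖dualComponent h i‖ ^ q) (‖h‖ ^ q) := by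
  have hfin : ∀ s : Finset ι, ∑ i ∈ s, ‖dualComponent h i‖ ^ q ≤ ‖h‖ ^ q := fun s =>
    Real.sum_rpow_le_of_forall_sum_mul_le hpq (fun i => norm_nonneg _) (norm_nonneg h)
      fun c hc => sum_mul_norm_dualComponent_le hpq h s hc
  have hs : Summable fun i => ‖dualComponent h i‖ ^ q :=
    summable_of_sum_le (fun i => Real.rpow_nonneg (norm_nonneg _) q) hfin
  refine (hs.hasSum_iff).mpr (le_antisymm (hs.tsum_le_of_sum_le hfin) ?_)
  exact (Real.le_rpow_inv_iff_of_pos (norm_nonneg h) (tsum_nonneg fun i => by positivity)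
    hpq.symm.pos).mp (norm_le_tsum_rpow_norm_dualComponent hpq h hs)

lemma exists_dualComponent_eq (hpq : p.HolderConjugate q) (g : ∀ i, E i →L[ℝ] ℝ)
    (hg : Summable fun i => ‖g i‖ ^ q) :
    ∃ h : lp E (ENNReal.ofReal p) →L[ℝ] ℝ, ∀ i, dualComponent h i = g i := by
  have hsum := fun f => (summable_apply_and_abs_tsum_apply_le hpq hg f).1
  let L : lp E (ENNReal.ofReal p) →ₗ[ℝ] ℝ :=
    { toFun := fun f => ∑' i, g i (f i)
      map_add' := fun f f' => by
        simpa only [lp.coeFn_add, Pi.add_apply, map_add] using (hsum f).tsum_add (hsum f')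
      map_smul' := fun c f => by
        simpa only [lp.coeFn_smul, Pi.smul_apply, map_smul, smul_eq_mul, RingHom.id_apply]
          using tsum_mul_left }
  refine ⟨L.mkContinuous _ fun f => (summable_apply_and_abs_tsum_apply_le hpq hg f).2,
    fun i => ?_⟩
  ext v
  change ∑' j, g j (lp.single _ i v j) = g i v
  rw [tsum_eq_single i fun j hj => by rw [lp.single_apply_ne _ _ _ hj, map_zero],
    lp.single_apply_self]

end HolderDuality

section SupportFunctionals

variable {p q : ℝ} [Fact (1 ≤ ENNReal.ofReal p)]

lemma dualComponent_of_mem_suppFunctionals (hpq : p.HolderConjugate q)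
    {x : lp E (ENNReal.ofReal p)} (hx : x ≠ 0) {h : lp E (ENNReal.ofReal p) →L[ℝ] ℝ}
    (hh : h ∈ suppFunctionals x) (i : ι) :
    ‖dualComponent h i‖ = supportWeight x i ∧
      dualComponent h i (x i) = supportWeight x i * ‖x i‖ := by
  obtain ⟨hnorm, hhx⟩ := hh
  have hX : 0 < ‖x‖ := norm_pos_iff.mpr hx
  set a : ι → ℝ := fun i => ‖x i‖ / ‖x‖
  set b : ι → ℝ := fun i => ‖dualComponent h i‖
  have ha : HasSum (fun i => a i ^ p) 1 := hasSum_rpow_norm_div hpq.pos hx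
  have hb : HasSum (fun i => b i ^ q) 1 := by
    simpa [hnorm] using hasSum_rpow_norm_dualComponent hpq h
  have hc : HasSum (fun i => dualComponent h i (x i) / ‖x‖) 1 := by
    simpa [hhx, hX.ne'] using (hasSum_dualComponent ENNReal.ofReal_ne_top h x).div_const ‖x‖
  have hY : HasSum (fun i => a i ^ p / p + b i ^ q / q) 1 := by
    simpa only [one_div, hpq.inv_add_inv_eq_one] using (ha.div_const p).add (hb.div_const q)
  have hca : ∀ i, dualComponent h i (x i) / ‖x‖ ≤ a i * b i := fun i => by
    rw [div_mul_eq_mul_div, mul_comm]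
    gcongr
    exact (le_abs_self _).trans ((dualComponent h i).le_opNorm (x i))
  have hab : ∀ i, a i * b i ≤ a i ^ p / p + b i ^ q / q := fun i =>
    Real.young_inequality_of_nonneg (by positivity) (norm_nonneg _) hpq
  -- both sides sum to `1`, so all the termwise inequalities are equalities
  have heq := congrFun (hc.eq_of_le hY fun i => (hca i).trans (hab i)) i
  have hyoung : a i ^ p = b i ^ q := (Real.young_inequality_eq_iff_of_nonneg (by positivity)
    (norm_nonneg _) hpq).mp (le_antisymm (hab i) (heq ▸ hca i))
  have hbi : b i = supportWeight x i :=
    calc b i = (b i ^ q) ^ q⁻¹ := (Real.rpow_rpow_inv (norm_nonneg _) hpq.symm.ne_zero).symm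
      _ = a i ^ (p * q⁻¹) := by rw [← hyoung, Real.rpow_mul (by positivity)]
      _ = supportWeight x i := by rw [← div_eq_mul_inv, hpq.div_conj_eq_sub_one]; rfl
  refine ⟨hbi, ?_⟩
  have hxi := le_antisymm (hca i) (heq ▸ hab i)
  rw [div_eq_iff hX.ne'] at hxi
  rw [hxi, ← hbi]
  change ‖x i‖ / ‖x‖ * b i * ‖x‖ = b i * ‖x i‖
  field_simp

lemma mem_suppFunctionals_of_dualComponent (hpq : p.HolderConjugate q)
    {x : lp E (ENNReal.ofReal p)} (hx : x ≠ 0) {h : lp E (ENNReal.ofReal p) →L[ℝ] ℝ}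
    (H : ∀ i, ‖dualComponent h i‖ = supportWeight x i ∧
      dualComponent h i (x i) = supportWeight x i * ‖x i‖) :
    h ∈ suppFunctionals x := by
  have ha := hasSum_rpow_norm_div hpq.pos hx
  have hnorm : ‖h‖ = 1 := by
    have hq := (hasSum_rpow_norm_dualComponent hpq h).unique
      (by simpa only [(H _).1, supportWeight_rpow hpq] using ha)
    rw [← Real.rpow_rpow_inv (norm_nonneg h) hpq.symm.ne_zero, hq, Real.one_rpow]
  refine ⟨hnorm, (hasSum_dualComponent ENNReal.ofReal_ne_top h x).unique ?_⟩
  simpa only [(H _).2, supportWeight_mul_norm hpq.ne_zero hx, one_mul] using ha.mul_right ‖x‖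

lemma norm_dualComponent_sub_le (hpq : p.HolderConjugate q) {x : lp E (ENNReal.ofReal p)}
    (hx : x ≠ 0) {h h' : lp E (ENNReal.ofReal p) →L[ℝ] ℝ} (hh : h ∈ suppFunctionals x)
    (hh' : h' ∈ suppFunctionals x) (i : ι) :
    ‖dualComponent (h - h') i‖ ≤ supportWeight x i * Metric.diam (suppFunctionals (x i)) := by
  obtain ⟨hn, hv⟩ := dualComponent_of_mem_suppFunctionals hpq hx hh i
  obtain ⟨hn', hv'⟩ := dualComponent_of_mem_suppFunctionals hpq hx hh' i
  rw [dualComponent_sub]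
  by_cases hi : x i = 0
  · rw [supportWeight_eq_zero hpq.lt hi] at hn hn'
    simp [norm_eq_zero.mp hn, norm_eq_zero.mp hn', supportWeight_eq_zero hpq.lt hi]
  have hw := supportWeight_pos hi
  have mem : ∀ {f : E i →L[ℝ] ℝ}, ‖f‖ = supportWeight x i →
      f (x i) = supportWeight x i * ‖x i‖ → (supportWeight x i)⁻¹ • f ∈ suppFunctionals (x i) :=
    fun hf hfx => (smul_mem_suppFunctionals_iff hw).mpr
      (by simpa [smul_inv_smul₀ hw.ne'] using ⟨hf, hfx⟩)
  set w := supportWeight x i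
  calc ‖dualComponent h i - dualComponent h' i‖
      = ‖w • (w⁻¹ • dualComponent h i - w⁻¹ • dualComponent h' i)‖ := by
        rw [smul_sub, smul_inv_smul₀ hw.ne', smul_inv_smul₀ hw.ne']
    _ = w * dist (w⁻¹ • dualComponent h i) (w⁻¹ • dualComponent h' i) := by
        rw [norm_smul, Real.norm_of_nonneg hw.le, dist_eq_norm]
    _ ≤ supportWeight x i * Metric.diam (suppFunctionals (x i)) := by
        gcongr
        exact Metric.dist_le_diam_of_mem (isBounded_suppFunctionals _) (mem hn hv) (mem hn' hv')

lemma exists_mem_suppFunctionals_dualComponent_eq (hpq : p.HolderConjugate q)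
    {x : lp E (ENNReal.ofReal p)} (hx : x ≠ 0) (g : ∀ i, E i →L[ℝ] ℝ)
    (hg : ∀ i, x i ≠ 0 → g i ∈ suppFunctionals (x i)) :
    ∃ G ∈ suppFunctionals x, ∀ i, dualComponent G i = supportWeight x i • g i := by
  have hcomp : ∀ i, ‖supportWeight x i • g i‖ = supportWeight x i ∧
      (supportWeight x i • g i) (x i) = supportWeight x i * ‖x i‖ := fun i => by
    by_cases hi : x i = 0
    · simp [supportWeight_eq_zero hpq.lt hi]
    · exact (smul_mem_suppFunctionals_iff (supportWeight_pos hi)).mp (hg i hi)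
  have hs : Summable fun i => ‖supportWeight x i • g i‖ ^ q := by
    simpa only [(hcomp _).1] using (hasSum_rpow_supportWeight hpq hx).summable
  obtain ⟨G, hG⟩ := exists_dualComponent_eq hpq _ hs
  exact ⟨G, mem_suppFunctionals_of_dualComponent hpq hx fun i => hG i ▸ hcomp i, hG⟩

lemma hasSum_rpow_dist (hpq : p.HolderConjugate q) (h h' : lp E (ENNReal.ofReal p) →L[ℝ] ℝ) :
    HasSum (fun i => ‖dualComponent h i - dualComponent h' i‖ ^ q) (dist h h' ^ q) := by
  simpa only [dist_eq_norm, dualComponent_sub] using hasSum_rpow_norm_dualComponent hpq (h - h')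

lemma supportWeight_mul_diam_nonneg (x : lp E (ENNReal.ofReal p)) (i : ι) :
    0 ≤ supportWeight x i * Metric.diam (suppFunctionals (x i)) :=
  mul_nonneg (supportWeight_nonneg x i) Metric.diam_nonneg

lemma summable_rpow_supportWeight_mul_diam (hpq : p.HolderConjugate q)
    {x : lp E (ENNReal.ofReal p)} (hx : x ≠ 0) :
    Summable fun i => (supportWeight x i * Metric.diam (suppFunctionals (x i))) ^ q := by
  refine .of_nonneg_of_le (fun i => Real.rpow_nonneg (supportWeight_mul_diam_nonneg x i) q)
    (fun i => ?_) ((hasSum_rpow_supportWeight hpq hx).summable.mul_left (2 ^ q))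
  rw [← Real.mul_rpow zero_le_two (supportWeight_nonneg x i), mul_comm 2]
  exact Real.rpow_le_rpow (supportWeight_mul_diam_nonneg x i) (mul_le_mul_of_nonneg_left
    (diam_suppFunctionals_le_two _) (supportWeight_nonneg x i)) hpq.symm.nonneg

lemma diam_suppFunctionals_le (hpq : p.HolderConjugate q) {x : lp E (ENNReal.ofReal p)}
    (hx : x ≠ 0) : Metric.diam (suppFunctionals x) ≤
      (∑' i, (supportWeight x i * Metric.diam (suppFunctionals (x i))) ^ q) ^ q⁻¹ := by
  have hS : 0 ≤ ∑' i, (supportWeight x i * Metric.diam (suppFunctionals (x i))) ^ q :=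
    tsum_nonneg fun i => Real.rpow_nonneg (supportWeight_mul_diam_nonneg x i) q
  refine Metric.diam_le_of_forall_dist_le (by positivity) fun h hh h' hh' => ?_
  rw [Real.le_rpow_inv_iff_of_pos dist_nonneg hS hpq.symm.pos,
    ← (hasSum_rpow_dist hpq h h').tsum_eq]
  refine (hasSum_rpow_dist hpq h h').summable.tsum_le_tsum (fun i => ?_)
    (summable_rpow_supportWeight_mul_diam hpq hx)
  rw [← dualComponent_sub]
  exact Real.rpow_le_rpow (norm_nonneg _) (norm_dualComponent_sub_le hpq hx hh hh' i)
    hpq.symm.nonneg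

lemma tsum_rpow_le_diam_suppFunctionals_rpow (hpq : p.HolderConjugate q)
    {x : lp E (ENNReal.ofReal p)} (hx : x ≠ 0) :
    ∑' i, (supportWeight x i * Metric.diam (suppFunctionals (x i))) ^ q ≤
      Metric.diam (suppFunctionals x) ^ q := by
  set d : ι → ℝ := fun i => supportWeight x i * Metric.diam (suppFunctionals (x i))
  have hd : ∀ i, 0 ≤ d i := supportWeight_mul_diam_nonneg x
  refine le_of_forall_pos_lt_one_mul_le fun θ hθ₀ hθ₁ => ?_
  set σ := θ ^ q⁻¹
  have hσ₀ : 0 < σ := by positivity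
  have hσ₁ : σ < 1 := Real.rpow_lt_one hθ₀.le hθ₁ (inv_pos.mpr hpq.symm.pos)
  have hσq : σ ^ q = θ := Real.rpow_inv_rpow hθ₀.le hpq.symm.ne_zero
  choose g g' hgg' using fun i => show ∃ g g' : E i →L[ℝ] ℝ, x i ≠ 0 →
      g ∈ suppFunctionals (x i) ∧ g' ∈ suppFunctionals (x i) ∧
        σ * Metric.diam (suppFunctionals (x i)) ≤ dist g g' by
    by_cases hi : x i = 0
    · exact ⟨0, 0, fun h => (h hi).elim⟩
    · obtain ⟨g, hg, g', hg', hdist⟩ := exists_mul_diam_le_dist_suppFunctionals hi hσ₀.le hσ₁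
      exact ⟨g, g', fun _ => ⟨hg, hg', hdist⟩⟩
  obtain ⟨G, hG, hGc⟩ :=
    exists_mem_suppFunctionals_dualComponent_eq hpq hx g fun i hi => (hgg' i hi).1
  obtain ⟨G', hG', hG'c⟩ :=
    exists_mem_suppFunctionals_dualComponent_eq hpq hx g' fun i hi => (hgg' i hi).2.1
  have hterm : ∀ i, σ * d i ≤ ‖dualComponent G i - dualComponent G' i‖ := fun i => by
    rw [hGc, hG'c, ← smul_sub (supportWeight x i) (g i) (g' i), norm_smul,
      Real.norm_of_nonneg (supportWeight_nonneg x i), ← dist_eq_norm, mul_left_comm]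
    by_cases hi : x i = 0
    · simp [supportWeight_eq_zero hpq.lt hi]
    · exact mul_le_mul_of_nonneg_left (hgg' i hi).2.2 (supportWeight_nonneg x i)
  calc θ * ∑' i, d i ^ q = ∑' i, (σ * d i) ^ q := by
        simp only [Real.mul_rpow hσ₀.le (hd _), hσq, tsum_mul_left]
    _ ≤ dist G G' ^ q := by
        refine hasSum_le (fun i => Real.rpow_le_rpow (mul_nonneg hσ₀.le (hd i)) (hterm i)
          hpq.symm.nonneg) ?_ (hasSum_rpow_dist hpq G G')
        simpa only [Real.mul_rpow hσ₀.le (hd _)]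
          using ((summable_rpow_supportWeight_mul_diam hpq hx).mul_left (σ ^ q)).hasSum
    _ ≤ Metric.diam (suppFunctionals x) ^ q := Real.rpow_le_rpow dist_nonneg
        (Metric.dist_le_diam_of_mem (isBounded_suppFunctionals x) hG hG') hpq.symm.nonneg

theorem diam_suppFunctionals (hpq : p.HolderConjugate q) {x : lp E (ENNReal.ofReal p)}
    (hx : x ≠ 0) : Metric.diam (suppFunctionals x) =
      (∑' i, (supportWeight x i * Metric.diam (suppFunctionals (x i))) ^ q) ^ q⁻¹ :=
  le_antisymm (diam_suppFunctionals_le hpq hx) <|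
    (Real.rpow_inv_le_iff_of_pos
      (tsum_nonneg fun i => Real.rpow_nonneg (supportWeight_mul_diam_nonneg x i) q)
      Metric.diam_nonneg hpq.symm.pos).mpr (tsum_rpow_le_diam_suppFunctionals_rpow hpq hx)

end SupportFunctionals

end lp

theorem stmt7_general (E : ℕ → Type*) [∀ n, NormedAddCommGroup (E n)]
    [∀ n, NormedSpace ℝ (E n)]
    (p q : ℝ) (hpq : p.HolderConjugate q)
    [Fact (1 ≤ ENNReal.ofReal p)]
    (x : lp E (ENNReal.ofReal p)) (hx : x ≠ 0) :
    Metric.diam (suppFunctionals x) =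
      (∑' n, (‖x n‖ ^ p / ‖x‖ ^ p) *
        (if x n = 0 then 0 else Metric.diam (suppFunctionals (x n))) ^ q) ^ (1 / q) := by
  have hterm : ∀ n, (lp.supportWeight x n * Metric.diam (suppFunctionals (x n))) ^ q =
      ‖x n‖ ^ p / ‖x‖ ^ p * (if x n = 0 then 0 else Metric.diam (suppFunctionals (x n))) ^ q := by
    intro n
    split_ifs with hn
    · simp [lp.supportWeight_eq_zero hpq.lt hn, hn, Real.zero_rpow hpq.ne_zero,
        Real.zero_rpow hpq.symm.ne_zero]
    · rw [Real.mul_rpow (lp.supportWeight_nonneg x n) Metric.diam_nonneg,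
        lp.supportWeight_rpow hpq, Real.div_rpow (norm_nonneg _) (norm_nonneg _)]
  rw [lp.diam_suppFunctionals hpq hx, one_div]
  simp only [hterm]

/-- For 1 < p < ∞ with conjugate q and a nonzero `x = (x_n)` in ⊕_p E_n, the diameter of
the set of support functionals of `x` is
`(∑_n (‖x_n‖^p/‖x‖^p) · D(x_n)^q)^{1/q}`, where `D(x_n)` is the diameter of the set of
support functionals of `x_n` (the n-th term vanishing when `x_n = 0`). -/
theorem stmt7 (E : ℕ → Type*) [∀ n, NormedAddCommGroup (E n)]
    [∀ n, NormedSpace ℝ (E n)]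
    (p q : ℝ) (hpq : p.HolderConjugate q)
    [Fact (1 ≤ ENNReal.ofReal p)] [Fact (1 ≤ ENNReal.ofReal q)]
    (x : lp E (ENNReal.ofReal p)) (hx : x ≠ 0) :
    Metric.diam (suppFunctionals x) =
      (∑' n, (‖x n‖ ^ p / ‖x‖ ^ p) *
        (if x n = 0 then 0 else Metric.diam (suppFunctionals (x n))) ^ q) ^ (1 / q) :=
  stmt7_general E p q hpq x hx
end

section
/- There exists a Banach space X such that every nonzero element x ∈ X has D(x) < 2 (i.e., every nonzero element is approximately smooth), but 𝒟(X) = 2 (the space is not approximately smooth). Concretely, if (X_n) are Banach spaces with 𝒟(X_n) = 2 − 1/n, then X = ⊕_p X_n for any 1 < p < ∞ has this property. -/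
/-!
A support functional `f` of `x ∈ ⊕_p X_n` restricts on `X_n` to a subgradient of
`v ↦ (‖x‖ ^ p - ‖x_n‖ ^ p + ‖v‖ ^ p) ^ (1 / p)` at `x_n`; differentiating in `‖v‖` shows that
this restriction is `w_n = (‖x_n‖ / ‖x‖) ^ (p - 1)` times a support functional of `x_n`. Hence,
by Hölder's inequality, two support functionals of `x` are at distance at most
`(∑ (w_n D(x_n)) ^ q) ^ (1 / q)`, where `∑ w_n ^ q = 1`; this is `< 2` because `D(x_n) < 2` at
some `n` with `w_n > 0`. On the other hand, precomposing with the `n`-th coordinate embeds the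
support functionals of `x_n` isometrically into those of `x_n` placed in the `n`-th summand, so
`𝒟(⊕_p X_n) ≥ 𝒟(X_n) = 2 - 1 / (n + 1)` for every `n`.
-/

open scoped ENNReal

/-- The quantity 𝒟(X): the supremum over nonzero x of the diameter of the set of
norm-one support functionals of x. -/
noncomputable def scrD (X : Type*) [NormedAddCommGroup X] [NormedSpace ℝ X] : ℝ :=
  sSup ((fun x : X => Metric.diam {f : X →L[ℝ] ℝ | ‖f‖ = 1 ∧ f x = ‖x‖}) '' {x | x ≠ 0})

open Filter Set Topology

def supportFunctionals {X : Type*} [NormedAddCommGroup X] [NormedSpace ℝ X] (x : X) :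
    Set (X →L[ℝ] ℝ) :=
  {f | ‖f‖ = 1 ∧ f x = ‖x‖}

section SupportFunctionals

variable {X : Type*} [NormedAddCommGroup X] [NormedSpace ℝ X]

theorem diam_supportFunctionals_le_two (x : X) : Metric.diam (supportFunctionals x) ≤ 2 :=
  Metric.diam_le_of_forall_dist_le zero_le_two fun f hf g hg => by
    rw [dist_eq_norm]
    linarith [norm_sub_le f g, hf.1, hg.1]

theorem isBounded_supportFunctionals (x : X) : Bornology.IsBounded (supportFunctionals x) :=
  Metric.isBounded_iff.2 ⟨2, fun f hf g hg => by
    rw [dist_eq_norm]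
    linarith [norm_sub_le f g, hf.1, hg.1]⟩

theorem diam_supportFunctionals_le_scrD {x : X} (hx : x ≠ 0) :
    Metric.diam (supportFunctionals x) ≤ scrD X :=
  le_csSup ⟨2, by rintro _ ⟨y, -, rfl⟩; exact diam_supportFunctionals_le_two y⟩ ⟨x, hx, rfl⟩

theorem scrD_nonneg : 0 ≤ scrD X :=
  Real.sSup_nonneg <| by rintro _ ⟨x, -, rfl⟩; exact Metric.diam_nonneg

theorem scrD_le_two : scrD X ≤ 2 :=
  Real.sSup_le (by rintro _ ⟨x, -, rfl⟩; exact diam_supportFunctionals_le_two x) zero_le_two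

theorem inv_smul_mem_supportFunctionals {u : X} (hu : u ≠ 0) {ℓ : X →L[ℝ] ℝ} {a : ℝ}
    (ha : 0 < a) (hℓ : ‖ℓ‖ ≤ a) (hℓu : ℓ u = a * ‖u‖) : a⁻¹ • ℓ ∈ supportFunctionals u := by
  have hval : (a⁻¹ • ℓ) u = ‖u‖ := by
    rw [smul_apply, hℓu, smul_eq_mul, inv_mul_cancel_left₀ ha.ne']
  refine ⟨le_antisymm ?_ ?_, hval⟩
  · rw [norm_smul, norm_inv, Real.norm_of_nonneg ha.le]
    exact inv_mul_le_one_of_le₀ hℓ ha.le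
  · have := (a⁻¹ • ℓ).ratio_le_opNorm u
    rwa [hval, Real.norm_of_nonneg (norm_nonneg u), div_self (norm_ne_zero_iff.2 hu)] at this

theorem norm_sub_le_mul_diam_supportFunctionals {u : X} (hu : u ≠ 0) {ℓ₁ ℓ₂ : X →L[ℝ] ℝ}
    {a : ℝ} (ha : 0 ≤ a) (hℓ₁ : ‖ℓ₁‖ ≤ a) (hℓ₁u : ℓ₁ u = a * ‖u‖) (hℓ₂ : ‖ℓ₂‖ ≤ a)
    (hℓ₂u : ℓ₂ u = a * ‖u‖) :
    ‖ℓ₁ - ℓ₂‖ ≤ a * Metric.diam (supportFunctionals u) := by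
  rcases ha.eq_or_lt with rfl | ha
  · rw [zero_mul]
    linarith [norm_sub_le ℓ₁ ℓ₂]
  have hdist := Metric.dist_le_diam_of_mem (isBounded_supportFunctionals u)
    (inv_smul_mem_supportFunctionals hu ha hℓ₁ hℓ₁u)
    (inv_smul_mem_supportFunctionals hu ha hℓ₂ hℓ₂u)
  rw [dist_eq_norm, ← smul_sub a⁻¹ ℓ₁ ℓ₂, norm_smul, norm_inv, Real.norm_of_nonneg ha.le] at hdist
  rwa [inv_mul_le_iff₀ ha] at hdist

end SupportFunctionals

theorem le_mul_of_eventually_mul_le_sub {φ : ℝ → ℝ} {a s c d : ℝ} (hφ : HasDerivAt φ a s)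
    (h : ∀ᶠ t in 𝓝[>] 0, t * c ≤ φ (s + t * d) - φ s) : c ≤ a * d := by
  have hline : HasDerivAt (fun t : ℝ => s + t * d) d 0 := by
    simpa using ((hasDerivAt_id (0 : ℝ)).mul_const d).const_add s
  have hcomp : HasDerivAt (fun t => φ (s + t * d)) (a * d) 0 :=
    (by simpa using hφ : HasDerivAt φ a (s + 0 * d)).comp 0 hline
  have hslope := (hasDerivAt_iff_tendsto_slope.1 hcomp).mono_left
    (nhdsWithin_mono 0 fun t (ht : t ∈ Ioi 0) => ne_of_gt ht)
  refine ge_of_tendsto hslope ?_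
  filter_upwards [h, self_mem_nhdsWithin] with t ht (htpos : 0 < t)
  rw [slope_def_field, sub_zero, zero_mul, add_zero, le_div_iff₀ htpos, mul_comm]
  exact ht

/-- The hypothesis says that `ℓ` is a subgradient of `φ ∘ ‖·‖` at `u`; differentiate along the
rays `u + t • v` and `(1 - t) • u`. -/
theorem ContinuousLinearMap.norm_le_and_apply_eq_of_sub_le {X : Type*} [NormedAddCommGroup X]
    [NormedSpace ℝ X] (ℓ : X →L[ℝ] ℝ) (u : X) {φ : ℝ → ℝ} {a : ℝ}
    (hmono : MonotoneOn φ (Ici 0)) (hφ : HasDerivAt φ a ‖u‖)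
    (h : ∀ v, ℓ v - ℓ u ≤ φ ‖v‖ - φ ‖u‖) : ‖ℓ‖ ≤ a ∧ ℓ u = a * ‖u‖ := by
  have hle : ∀ v, ℓ v ≤ a * ‖v‖ := fun v => by
    refine le_mul_of_eventually_mul_le_sub hφ ?_
    filter_upwards [self_mem_nhdsWithin] with t (ht : 0 < t)
    calc t * ℓ v = ℓ (u + t • v) - ℓ u := by simp
      _ ≤ φ ‖u + t • v‖ - φ ‖u‖ := h _
      _ ≤ φ (‖u‖ + t * ‖v‖) - φ ‖u‖ := by
        gcongr
        refine hmono (norm_nonneg _) (mem_Ici.2 (by positivity)) ?_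
        simpa [norm_smul, abs_of_pos ht] using norm_add_le u (t • v)
  have ha : 0 ≤ a := by
    simpa using le_mul_of_eventually_mul_le_sub (c := 0) (d := 1) hφ <|
      eventually_mem_nhdsWithin.mono fun t (ht : 0 < t) => by
        rw [mul_zero, mul_one, sub_nonneg]
        exact hmono (norm_nonneg u) (mem_Ici.2 (by positivity)) (by linarith)
  refine ⟨ℓ.opNorm_le_bound ha fun v => abs_le.2 ⟨?_, hle v⟩, le_antisymm (hle u) ?_⟩
  · linarith [show -ℓ v ≤ a * ‖v‖ by simpa using hle (-v)]
  · have := le_mul_of_eventually_mul_le_sub (c := -ℓ u) (d := -‖u‖) hφ <| by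
      filter_upwards [Ioo_mem_nhdsGT zero_lt_one] with t ⟨ht0, ht1⟩
      have hv : ‖(1 - t) • u‖ = ‖u‖ + t * -‖u‖ := by
        rw [norm_smul, Real.norm_of_nonneg (by linarith)]; ring
      have := h ((1 - t) • u)
      rw [hv, sub_smul, one_smul, map_sub, map_smul, smul_eq_mul] at this
      linarith
    linarith

theorem hasDerivAt_rpow_add_rpow_inv {C s p : ℝ} (hp : 1 ≤ p) (hs : 0 ≤ s)
    (h : 0 < C + s ^ p) :
    HasDerivAt (fun t => (C + t ^ p) ^ p⁻¹) ((s / (C + s ^ p) ^ p⁻¹) ^ (p - 1)) s := by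
  have hp0 : p ≠ 0 := by positivity
  have hd := ((Real.hasDerivAt_rpow_const (x := s) (Or.inr hp)).const_add C).rpow_const
    (p := p⁻¹) (Or.inl h.ne')
  convert hd using 1
  rw [Real.div_rpow hs (by positivity), ← Real.rpow_mul h.le, div_eq_mul_inv,
    ← Real.rpow_neg h.le]
  field_simp
  ring_nf

theorem mul_rpow_le_rpow_mul_rpow {w d c q : ℝ} (hq : 0 ≤ q) (hw : 0 ≤ w) (hd0 : 0 ≤ d)
    (hdc : d ≤ c) : (w * d) ^ q ≤ c ^ q * w ^ q := by
  rw [Real.mul_rpow hw hd0, mul_comm (w ^ q)]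
  exact mul_le_mul_of_nonneg_right (Real.rpow_le_rpow hd0 hdc hq) (Real.rpow_nonneg hw q)

theorem Summable.mul_rpow_of_le {ι : Type*} {w d : ι → ℝ} {q c : ℝ} (hq : 0 ≤ q)
    (hw0 : ∀ i, 0 ≤ w i) (hw : Summable fun i => w i ^ q) (hd0 : ∀ i, 0 ≤ d i)
    (hdc : ∀ i, d i ≤ c) : Summable fun i => (w i * d i) ^ q :=
  .of_nonneg_of_le (fun i => by have := hw0 i; have := hd0 i; positivity)
    (fun i => mul_rpow_le_rpow_mul_rpow hq (hw0 i) (hd0 i) (hdc i)) (hw.mul_left (c ^ q))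

theorem rpow_tsum_mul_rpow_lt {ι : Type*} {w d : ι → ℝ} {q c : ℝ} (hq : 0 < q)
    (hw0 : ∀ i, 0 ≤ w i) (hw : HasSum (fun i => w i ^ q) 1) (hd0 : ∀ i, 0 ≤ d i)
    (hdc : ∀ i, d i ≤ c) {m : ι} (hwm : 0 < w m) (hdm : d m < c) :
    (∑' i, (w i * d i) ^ q) ^ (1 / q) < c := by
  have hc : 0 ≤ c := (hd0 m).trans hdm.le
  have hlt : (w m * d m) ^ q < c ^ q * w m ^ q := by
    rw [Real.mul_rpow (hw0 m) (hd0 m), mul_comm (w m ^ q)]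
    exact mul_lt_mul_of_pos_right (Real.rpow_lt_rpow (hd0 m) hdm hq) (by positivity)
  have hsum : ∑' i, (w i * d i) ^ q < c ^ q := by
    calc ∑' i, (w i * d i) ^ q
        < ∑' i, c ^ q * w i ^ q := Summable.tsum_lt_tsum
          (fun i => mul_rpow_le_rpow_mul_rpow hq.le (hw0 i) (hd0 i) (hdc i)) hlt
          (hw.summable.mul_rpow_of_le hq.le hw0 hd0 hdc) (hw.summable.mul_left _)
      _ = c ^ q := by rw [tsum_mul_left, hw.tsum_eq, mul_one]
  calc (∑' i, (w i * d i) ^ q) ^ (1 / q) < (c ^ q) ^ (1 / q) :=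
        Real.rpow_lt_rpow (tsum_nonneg fun i => by have := hw0 i; have := hd0 i; positivity)
          hsum (by positivity)
    _ = c := by rw [one_div, Real.rpow_rpow_inv hc hq.ne']

namespace lp

variable {ι : Type*} {E : ι → Type*} [∀ i, NormedAddCommGroup (E i)] {p : ℝ≥0∞}

theorem norm_add_single_sub_rpow [DecidableEq ι] (hp : 0 < p.toReal) (x : lp E p) (i : ι)
    (v : E i) :
    ‖x + lp.single p i (v - x i)‖ ^ p.toReal =
      ‖x‖ ^ p.toReal - ‖x i‖ ^ p.toReal + ‖v‖ ^ p.toReal := by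
  have hupd := (hasSum_norm hp x).update i (‖v‖ ^ p.toReal)
  refine (hasSum_norm hp _).unique (hupd.congr_fun fun j => ?_) |>.trans (by ring)
  rcases eq_or_ne j i with rfl | hji
  · simp
  · simp [hji]

variable [Fact (1 ≤ p)]

theorem hasSum_rpow_sub_one_rpow {q : ℝ} (hpq : p.toReal.HolderConjugate q) {x : lp E p}
    (hx : x ≠ 0) : HasSum (fun i => ((‖x i‖ / ‖x‖) ^ (p.toReal - 1)) ^ q) 1 := by
  have hxp : 0 < ‖x‖ ^ p.toReal := Real.rpow_pos_of_pos (norm_pos_iff.2 hx) _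
  have h := (hasSum_norm hpq.pos x).div_const (‖x‖ ^ p.toReal)
  rw [div_self hxp.ne'] at h
  refine h.congr_fun fun i => ?_
  rw [← Real.rpow_mul (by positivity), hpq.sub_one_mul_conj,
    Real.div_rpow (norm_nonneg _) (norm_nonneg _)]

variable [∀ i, NormedSpace ℝ (E i)]

section Single

variable [DecidableEq ι]

/-- The weight `(‖x i‖ / ‖x‖) ^ (p - 1)` is the derivative of
`t ↦ (‖x‖ ^ p - ‖x i‖ ^ p + t ^ p) ^ (1 / p)`, the norm of `x` with its `i`-th coordinate replaced
by a vector of norm `t`, at `t = ‖x i‖`. -/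
theorem norm_comp_single_le_and_apply_eq (hp : 1 < p.toReal) {x : lp E p} (hx : x ≠ 0)
    {f : lp E p →L[ℝ] ℝ} (hf : f ∈ supportFunctionals x) (i : ι) :
    ‖f.comp (singleContinuousLinearMap ℝ E p i)‖ ≤ (‖x i‖ / ‖x‖) ^ (p.toReal - 1) ∧
      f.comp (singleContinuousLinearMap ℝ E p i) (x i) =
        (‖x i‖ / ‖x‖) ^ (p.toReal - 1) * ‖x i‖ := by
  set r := p.toReal
  have hr : 0 < r := zero_lt_one.trans hp
  set C := ‖x‖ ^ r - ‖x i‖ ^ r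
  have hxi : ‖x i‖ ≤ ‖x‖ := norm_apply_le_norm (zero_lt_one.trans_le Fact.out).ne' x i
  have hC : 0 ≤ C := sub_nonneg.2 (Real.rpow_le_rpow (norm_nonneg _) hxi hr.le)
  have hN : C + ‖x i‖ ^ r = ‖x‖ ^ r := sub_add_cancel _ _
  have hnorm : (C + ‖x i‖ ^ r) ^ r⁻¹ = ‖x‖ := by
    rw [hN, Real.rpow_rpow_inv (norm_nonneg _) hr.ne']
  refine ContinuousLinearMap.norm_le_and_apply_eq_of_sub_le _ _
    (φ := fun s => (C + s ^ r) ^ r⁻¹) ?mono ?deriv fun v => ?subgradient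
  case mono =>
    intro s (hs : 0 ≤ s) t _ hst
    dsimp only
    gcongr
  case deriv =>
    have := hasDerivAt_rpow_add_rpow_inv hp.le (norm_nonneg (x i))
      (by rw [hN]; exact Real.rpow_pos_of_pos (norm_pos_iff.2 hx) r)
    rwa [hnorm] at this
  case subgradient =>
    set y := x + lp.single p i (v - x i)
    have hfy : f y = ‖x‖ + (f.comp (singleContinuousLinearMap ℝ E p i) v -
        f.comp (singleContinuousLinearMap ℝ E p i) (x i)) := by
      simp [y, hf.2, lp.single_sub]
    have hy : ‖y‖ = (C + ‖v‖ ^ r) ^ r⁻¹ := by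
      rw [← norm_add_single_sub_rpow hr, Real.rpow_rpow_inv (norm_nonneg _) hr.ne']
    have hfy_le : f y ≤ ‖y‖ := by
      simpa [hf.1] using (le_abs_self (f y)).trans (f.le_opNorm y)
    show _ ≤ (C + ‖v‖ ^ r) ^ r⁻¹ - (C + ‖x i‖ ^ r) ^ r⁻¹
    rw [hnorm]
    linarith

theorem norm_le_of_norm_comp_single_le {q : ℝ} (hpq : p.toReal.HolderConjugate q)
    (h : lp E p →L[ℝ] ℝ) {b : ι → ℝ} (hb0 : ∀ i, 0 ≤ b i) (hbq : Summable fun i => b i ^ q)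
    (hb : ∀ i, ‖h.comp (singleContinuousLinearMap ℝ E p i)‖ ≤ b i) :
    ‖h‖ ≤ (∑' i, b i ^ q) ^ (1 / q) := by
  have hp : 0 < p.toReal := hpq.pos
  have hp_top : p ≠ ⊤ := fun h => by simp [h] at hp
  refine h.opNorm_le_bound (Real.rpow_nonneg (tsum_nonneg fun i => by have := hb0 i; positivity) _)
    fun y => ?_
  have hterm : ∀ i, ‖h (lp.single p i (y i))‖ ≤ b i * ‖y i‖ := fun i =>
    ((h.comp (singleContinuousLinearMap ℝ E p i)).le_opNorm (y i)).trans
      (mul_le_mul_of_nonneg_right (hb i) (norm_nonneg _))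
  have hyp : Summable fun i => ‖y i‖ ^ p.toReal := (lp.memℓp y).summable hp
  have hby : Summable fun i => b i * ‖y i‖ :=
    Real.summable_mul_of_Lp_Lq_of_nonneg hpq.symm hb0 (fun i => norm_nonneg _) hbq hyp
  have hhy : Summable fun i => ‖h (lp.single p i (y i))‖ :=
    .of_nonneg_of_le (fun i => norm_nonneg _) hterm hby
  calc ‖h y‖ = ‖∑' i, h (lp.single p i (y i))‖ := by
        rw [((lp.hasSum_single hp_top y).mapL h).tsum_eq]
    _ ≤ ∑' i, ‖h (lp.single p i (y i))‖ := norm_tsum_le_tsum_norm hhy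
    _ ≤ ∑' i, b i * ‖y i‖ := hhy.tsum_le_tsum hterm hby
    _ ≤ (∑' i, b i ^ q) ^ (1 / q) * (∑' i, ‖y i‖ ^ p.toReal) ^ (1 / p.toReal) :=
        Real.inner_le_Lp_mul_Lq_tsum_of_nonneg hpq.symm hb0 (fun i => norm_nonneg _) hbq hyp
    _ = (∑' i, b i ^ q) ^ (1 / q) * ‖y‖ := by rw [lp.norm_eq_tsum_rpow hp]

end Single

theorem diam_supportFunctionals_le {q : ℝ} (hpq : p.toReal.HolderConjugate q) {x : lp E p}
    (hx : x ≠ 0) :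
    Metric.diam (supportFunctionals x) ≤
      (∑' i, ((‖x i‖ / ‖x‖) ^ (p.toReal - 1) * Metric.diam (supportFunctionals (x i))) ^ q) ^
        (1 / q) := by
  classical
  have hw0 : ∀ i, 0 ≤ (‖x i‖ / ‖x‖) ^ (p.toReal - 1) := fun i => by positivity
  refine Metric.diam_le_of_forall_dist_le (by positivity) fun f hf g hg => ?_
  rw [dist_eq_norm]
  refine norm_le_of_norm_comp_single_le hpq _ (fun i => mul_nonneg (hw0 i) Metric.diam_nonneg)
    ((hasSum_rpow_sub_one_rpow hpq hx).summable.mul_rpow_of_le hpq.symm.nonneg hw0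
      (fun i => Metric.diam_nonneg) (fun i => diam_supportFunctionals_le_two (x i))) fun i => ?_
  obtain ⟨hfi, hfxi⟩ := norm_comp_single_le_and_apply_eq hpq.lt hx hf i
  obtain ⟨hgi, hgxi⟩ := norm_comp_single_le_and_apply_eq hpq.lt hx hg i
  rcases eq_or_ne (x i) 0 with hxi | hxi
  · have hwi : (‖x i‖ / ‖x‖) ^ (p.toReal - 1) = 0 := by
      simp [hxi, Real.zero_rpow (sub_pos.2 hpq.lt).ne']
    rw [hwi] at hfi hgi ⊢
    rw [ContinuousLinearMap.sub_comp, zero_mul]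
    linarith [norm_sub_le (f.comp (singleContinuousLinearMap ℝ E p i))
      (g.comp (singleContinuousLinearMap ℝ E p i))]
  · rw [ContinuousLinearMap.sub_comp]
    exact norm_sub_le_mul_diam_supportFunctionals hxi (hw0 i) hfi hfxi hgi hgxi

theorem diam_supportFunctionals_lt_two (hp : 1 < p.toReal)
    (hE : ∀ i, ∀ u : E i, u ≠ 0 → Metric.diam (supportFunctionals u) < 2) {x : lp E p}
    (hx : x ≠ 0) : Metric.diam (supportFunctionals x) < 2 := by
  have hpq := Real.HolderConjugate.conjExponent hp
  obtain ⟨m, hm⟩ : ∃ m, x m ≠ 0 := by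
    by_contra! h
    exact hx (lp.ext (funext h))
  refine (diam_supportFunctionals_le hpq hx).trans_lt <|
    rpow_tsum_mul_rpow_lt hpq.symm.pos (fun i => by positivity) (hasSum_rpow_sub_one_rpow hpq hx)
      (fun i => Metric.diam_nonneg) (fun i => diam_supportFunctionals_le_two (x i))
      (m := m) (by positivity) (hE m _ hm)

theorem norm_comp_evalCLM (i : ι) (h : E i →L[ℝ] ℝ) : ‖h.comp (evalCLM ℝ E p i)‖ = ‖h‖ := by
  classical
  refine le_antisymm ((h.opNorm_comp_le _).trans (mul_le_of_le_one_right (norm_nonneg h)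
    (LinearMap.mkContinuous_norm_le _ zero_le_one _)))
    (h.opNorm_le_bound (norm_nonneg _) fun v => ?_)
  calc ‖h v‖ = ‖h.comp (evalCLM ℝ E p i) (lp.single p i v)‖ := by simp [evalCLM]
    _ ≤ ‖h.comp (evalCLM ℝ E p i)‖ * ‖v‖ := by
      simpa [lp.norm_single (zero_lt_one.trans_le Fact.out)] using
        (h.comp (evalCLM ℝ E p i)).le_opNorm (lp.single p i v)

theorem diam_supportFunctionals_le_single [DecidableEq ι] (i : ι) (u : E i) :
    Metric.diam (supportFunctionals u) ≤ Metric.diam (supportFunctionals (lp.single p i u)) := by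
  have hiso : Isometry fun h : E i →L[ℝ] ℝ => h.comp (evalCLM ℝ E p i) :=
    Isometry.of_dist_eq fun h₁ h₂ => by
      rw [dist_eq_norm, dist_eq_norm, ← ContinuousLinearMap.sub_comp, norm_comp_evalCLM]
  rw [← hiso.diam_image]
  refine Metric.diam_mono (image_subset_iff.2 fun h hh => ⟨?_, ?_⟩)
    (isBounded_supportFunctionals _)
  · exact (norm_comp_evalCLM i h).trans hh.1
  · simp [evalCLM, hh.2, lp.norm_single (zero_lt_one.trans_le Fact.out)]

theorem scrD_le (i : ι) : scrD (E i) ≤ scrD (lp E p) := by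
  classical
  refine Real.sSup_le ?_ scrD_nonneg
  rintro _ ⟨u, hu : u ≠ 0, rfl⟩
  have hsingle : lp.single p i u ≠ 0 := by
    rwa [← norm_ne_zero_iff, lp.norm_single (zero_lt_one.trans_le Fact.out), norm_ne_zero_iff]
  exact (diam_supportFunctionals_le_single i u).trans (diam_supportFunctionals_le_scrD hsingle)

end lp

theorem stmt10_general (E : ℕ → Type*) [∀ n, NormedAddCommGroup (E n)]
    [∀ n, NormedSpace ℝ (E n)]
    (hD : ∀ n : ℕ, scrD (E n) = 2 - 1 / (n + 1))
    (p : ℝ) (hp : 1 < p) [Fact (1 ≤ ENNReal.ofReal p)] :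
    (∀ x : lp E (ENNReal.ofReal p), x ≠ 0 →
        Metric.diam {f : (lp E (ENNReal.ofReal p)) →L[ℝ] ℝ | ‖f‖ = 1 ∧ f x = ‖x‖} < 2) ∧
      scrD (lp E (ENNReal.ofReal p)) = 2 := by
  have hp' : 1 < (ENNReal.ofReal p).toReal := by rwa [ENNReal.toReal_ofReal (by linarith)]
  refine ⟨fun x hx => lp.diam_supportFunctionals_lt_two hp' (fun n u hu => ?_) hx, ?_⟩
  · calc Metric.diam (supportFunctionals u) ≤ scrD (E n) := diam_supportFunctionals_le_scrD hu
      _ = 2 - 1 / (n + 1) := hD n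
      _ < 2 := sub_lt_self 2 (by positivity)
  · have hlim : Tendsto (fun n : ℕ => 2 - 1 / ((n : ℝ) + 1)) atTop (𝓝 2) := by
      simpa using (tendsto_const_nhds (x := (2 : ℝ))).sub tendsto_one_div_add_atTop_nhds_zero_nat
    exact le_antisymm scrD_le_two
      (le_of_tendsto' hlim fun n => hD n ▸ lp.scrD_le (p := ENNReal.ofReal p) n)

/-- If (E_n) is a sequence of Banach spaces with 𝒟(E_n) = 2 - 1/n (indexing from 1),
then for 1 < p < ∞ the Banach space ⊕_p E_n satisfies D(x) < 2 for every nonzero x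
(every nonzero element is approximately smooth) while 𝒟(⊕_p E_n) = 2 (the space is
not approximately smooth). -/
theorem stmt10 (E : ℕ → Type*) [∀ n, NormedAddCommGroup (E n)]
    [∀ n, NormedSpace ℝ (E n)] [∀ n, CompleteSpace (E n)] [∀ n, Nontrivial (E n)]
    (hD : ∀ n : ℕ, scrD (E n) = 2 - 1 / (n + 1))
    (p : ℝ) (hp : 1 < p) [Fact (1 ≤ ENNReal.ofReal p)] :
    (∀ x : lp E (ENNReal.ofReal p), x ≠ 0 →
        Metric.diam {f : (lp E (ENNReal.ofReal p)) →L[ℝ] ℝ | ‖f‖ = 1 ∧ f x = ‖x‖} < 2) ∧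
      scrD (lp E (ENNReal.ofReal p)) = 2 :=
  stmt10_general E hD p hp
end

section
/- Let x = (x_n) be a nonzero element of the c_0-direct sum ⊕_0 X_n and f = (f_n) ∈ ⊕_1 X_n*. Then f is a support functional of x if and only if there exist λ_n ≥ 0 with ∑_{‖x_n‖ = ‖x‖_0} λ_n = 1 such that f_n = λ_n g_n with g_n ∈ J(x_n) for each n with ‖x_n‖ = ‖x‖_0, and f_n = 0 otherwise. -/
open scoped ENNReal
open Filter

/-- The c₀-direct sum of a sequence of normed spaces: the subspace of the ℓ_∞-direct sum
consisting of those sequences whose coordinate norms tend to zero, with the sup norm. -/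
noncomputable def c0Sum (E : ℕ → Type*) [∀ n, NormedAddCommGroup (E n)]
    [∀ n, NormedSpace ℝ (E n)] : Submodule ℝ (lp E ∞) where
  carrier := {f | Tendsto (fun n => ‖f n‖) atTop (nhds 0)}
  add_mem' := by
    intro f g hf hg
    refine squeeze_zero (fun n => norm_nonneg _) (fun n => ?_) (by simpa using hf.add hg)
    simpa using norm_add_le (f n) (g n)
  zero_mem' := by
    show Tendsto (fun n => ‖(0 : lp E ∞) n‖) atTop (nhds 0)
    simp only [lp.coeFn_zero, Pi.zero_apply, norm_zero]
    exact tendsto_const_nhds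
  smul_mem' := by
    intro c f hf
    refine squeeze_zero (fun n => norm_nonneg _) (fun n => ?_) (by simpa using hf.const_mul ‖c‖)
    simp [norm_smul]

/-!
A norm-one `f ∈ ⊕₁ Eₙ*` satisfies `|fₙ(xₙ)| ≤ ‖fₙ‖ ‖x‖` termwise, and these bounds sum to
`‖f‖ ‖x‖ = ‖x‖`. So `f(x) = ‖x‖` exactly when every bound is attained, i.e.
`fₙ(xₙ) = ‖fₙ‖ ‖x‖` for all `n`. For a single functional this forces `fₙ = 0` when
`‖xₙ‖ < ‖x‖`, and `fₙ = ‖fₙ‖ gₙ` with `gₙ ∈ J(xₙ)` when `‖xₙ‖ = ‖x‖`; the weights are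
`λₙ = ‖fₙ‖`.
-/

theorem eq_of_le_of_tsum_eq {ι α : Type*} [AddCommGroup α] [PartialOrder α]
    [IsOrderedAddMonoid α] [TopologicalSpace α] [IsTopologicalAddGroup α]
    [OrderClosedTopology α] {f g : ι → α} (hle : f ≤ g) (hf : Summable f) (hg : Summable g)
    (h : ∑' i, f i = ∑' i, g i) : f = g :=
  funext fun i => (hle i).eq_of_not_lt fun hi => (hf.tsum_lt_tsum hle hi hg).ne h

namespace ContinuousLinearMap

variable {E : Type*} [NormedAddCommGroup E] [NormedSpace ℝ E]

theorem apply_le_opNorm_mul_of_norm_le (φ : E →L[ℝ] ℝ) {y : E} {r : ℝ} (hy : ‖y‖ ≤ r) :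
    φ y ≤ ‖φ‖ * r :=
  (le_abs_self _).trans ((φ.le_opNorm y).trans (by gcongr))

theorem norm_smul_of_norm_eq_one {g : E →L[ℝ] ℝ} (hg : ‖g‖ = 1) {c : ℝ} (hc : 0 ≤ c) :
    ‖c • g‖ = c := by
  rw [norm_smul, hg, mul_one, Real.norm_of_nonneg hc]

theorem exists_norm_eq_one_eq_smul_of_apply_eq (φ : E →L[ℝ] ℝ) {y : E} (hy : y ≠ 0)
    (h : φ y = ‖φ‖ * ‖y‖) : ∃ g : E →L[ℝ] ℝ, ‖g‖ = 1 ∧ g y = ‖y‖ ∧ φ = ‖φ‖ • g := by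
  rcases eq_or_ne φ 0 with rfl | hφ
  · obtain ⟨g, hg1, hgy⟩ := exists_dual_vector ℝ y (norm_ne_zero_iff.mpr hy)
    exact ⟨g, hg1, by exact_mod_cast hgy, by simp⟩
  · have hφ' : ‖φ‖ ≠ 0 := norm_ne_zero_iff.mpr hφ
    refine ⟨‖φ‖⁻¹ • φ, ?_, ?_, ?_⟩
    · rw [norm_smul, norm_inv, norm_norm, inv_mul_cancel₀ hφ']
    · rw [smul_apply, smul_eq_mul, h, inv_mul_cancel_left₀ hφ']
    · rw [smul_smul, mul_inv_cancel₀ hφ', one_smul]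

theorem eq_zero_of_apply_eq_opNorm_mul (φ : E →L[ℝ] ℝ) {y : E} {r : ℝ} (hy : ‖y‖ < r)
    (h : φ y = ‖φ‖ * r) : φ = 0 := by
  by_contra hφ
  have hφy : φ y ≤ ‖φ‖ * ‖y‖ := φ.apply_le_opNorm_mul_of_norm_le le_rfl
  nlinarith [norm_pos_iff.mpr hφ]

theorem apply_eq_opNorm_mul_iff (φ : E →L[ℝ] ℝ) {y : E} {r : ℝ} (hr : 0 < r) (hy : ‖y‖ ≤ r) :
    φ y = ‖φ‖ * r ↔
      (‖y‖ = r → ∃ g : E →L[ℝ] ℝ, ‖g‖ = 1 ∧ g y = ‖y‖ ∧ φ = ‖φ‖ • g) ∧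
        (‖y‖ ≠ r → φ = 0) := by
  constructor
  · intro h
    refine ⟨fun hyr => ?_, fun hyr => φ.eq_zero_of_apply_eq_opNorm_mul (hy.lt_of_ne hyr) h⟩
    subst hyr
    exact φ.exists_norm_eq_one_eq_smul_of_apply_eq (norm_pos_iff.mp hr) h
  · rintro ⟨hmax, hoff⟩
    rcases eq_or_ne ‖y‖ r with hyr | hyr
    · obtain ⟨g, -, hgy, hφ⟩ := hmax hyr
      conv_lhs => rw [hφ]
      rw [smul_apply, smul_eq_mul, hgy, hyr]
    · simp [hoff hyr]

end ContinuousLinearMap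

namespace lp

variable {ι : Type*} {E : ι → Type*} [∀ i, NormedAddCommGroup (E i)]

theorem norm_eq_tsum_norm (f : lp E 1) : ‖f‖ = ∑' i, ‖f i‖ := by
  simpa using norm_eq_tsum_rpow (by norm_num) f

theorem summable_norm (f : lp E 1) : Summable fun i => ‖f i‖ := by
  simpa using (lp.memℓp f).summable (p := 1) (by norm_num)

theorem tsum_apply_eq_norm_iff [∀ i, NormedSpace ℝ (E i)] (f : lp (fun i => E i →L[ℝ] ℝ) 1)
    (x : lp E ∞) :
    (‖f‖ = 1 ∧ ∑' i, f i (x i) = ‖x‖) ↔ (‖f‖ = 1 ∧ ∀ i, f i (x i) = ‖f i‖ * ‖x‖) := by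
  have hle : ∀ i, f i (x i) ≤ ‖f i‖ * ‖x‖ := fun i =>
    (f i).apply_le_opNorm_mul_of_norm_le (norm_apply_le_norm ENNReal.top_ne_zero x i)
  have hbound : Summable fun i => ‖f i‖ * ‖x‖ := (summable_norm f).mul_right _
  have hpairing : Summable fun i => f i (x i) := hbound.of_norm_bounded fun i =>
    ((f i).le_opNorm _).trans (by gcongr; exact norm_apply_le_norm ENNReal.top_ne_zero x i)
  refine and_congr_right fun hf => ?_
  have htsum : ∑' i, ‖f i‖ * ‖x‖ = ‖x‖ := by
    rw [tsum_mul_right, ← norm_eq_tsum_norm, hf, one_mul]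
  constructor
  · intro h
    exact congrFun (eq_of_le_of_tsum_eq hle hpairing hbound (h.trans htsum.symm))
  · intro h
    rw [tsum_congr h, htsum]

end lp

/-- For a nonzero `x = (x_n)` in the c₀-direct sum ⊕_0 E_n, an element `f = (f_n)` of
⊕_1 E_n* is a support functional of `x` iff there are `λ_n ≥ 0` summing to 1 over the set
of indices where `‖x_n‖ = ‖x‖` such that `f_n = λ_n g_n` with `g_n` a norm-one support
functional of `x_n` on that set, and `f_n = 0` elsewhere. -/
theorem stmt12 (E : ℕ → Type*) [∀ n, NormedAddCommGroup (E n)]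
    [∀ n, NormedSpace ℝ (E n)]
    (x : c0Sum E) (hx : x ≠ 0) (f : lp (fun n => E n →L[ℝ] ℝ) 1) :
    (‖f‖ = 1 ∧ (∑' n, f n ((x : lp E ∞) n)) = ‖x‖) ↔
      ∃ lam : ℕ → ℝ, (∀ n, 0 ≤ lam n) ∧
        (∑' m : {n // ‖(x : lp E ∞) n‖ = ‖x‖}, lam m) = 1 ∧
        (∀ n, ‖(x : lp E ∞) n‖ = ‖x‖ →
          ∃ g : E n →L[ℝ] ℝ, ‖g‖ = 1 ∧ g ((x : lp E ∞) n) = ‖(x : lp E ∞) n‖ ∧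
            f n = lam n • g) ∧
        (∀ n, ‖(x : lp E ∞) n‖ ≠ ‖x‖ → f n = 0) := by
  set X := (x : lp E ∞)
  rw [show ‖x‖ = ‖X‖ from rfl, lp.tsum_apply_eq_norm_iff]
  have hX : 0 < ‖X‖ := (norm_pos_iff.mpr hx : 0 < ‖x‖)
  have hcoord n :=
    (f n).apply_eq_opNorm_mul_iff hX (lp.norm_apply_le_norm ENNReal.top_ne_zero X n)
  simp only [hcoord, forall_and]
  have hnorm (hoff : ∀ n, ‖X n‖ ≠ ‖X‖ → f n = 0) :
      ∑' m : {n // ‖X n‖ = ‖X‖}, ‖f m‖ = ‖f‖ := by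
    refine (tsum_subtype_eq_of_support_subset (s := {n | ‖X n‖ = ‖X‖}) ?_).trans
      (lp.norm_eq_tsum_norm f).symm
    intro n hn
    by_contra hoffn
    exact hn (by simp [hoff n hoffn])
  constructor
  · rintro ⟨hf, hmax, hoff⟩
    exact ⟨fun n => ‖f n‖, fun n => norm_nonneg _, (hnorm hoff).trans hf, hmax, hoff⟩
  · rintro ⟨lam, hlam0, hlam1, hmax, hoff⟩
    have hflam : ∀ m : {n // ‖X n‖ = ‖X‖}, ‖f m‖ = lam m := fun ⟨n, hn⟩ => by
      obtain ⟨g, hg1, -, hfg⟩ := hmax n hn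
      rw [hfg, ContinuousLinearMap.norm_smul_of_norm_eq_one hg1 (hlam0 n)]
    refine ⟨?_, fun n hn => ?_, hoff⟩
    · rw [← hnorm hoff, tsum_congr hflam, hlam1]
    · obtain ⟨g, hg1, hgx, hfg⟩ := hmax n hn
      refine ⟨g, hg1, hgx, ?_⟩
      rw [hfg, ContinuousLinearMap.norm_smul_of_norm_eq_one hg1 (hlam0 n)]
end

section
/- A nonzero element x = (x_n) of the c_0-direct sum ⊕_0 X_n is smooth if and only if there exists n_0 such that ‖x_n‖ < ‖x‖_0 for all n ≠ n_0 and x_{n_0} is a smooth point of X_{n_0}. -/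
open scoped ENNReal
open Filter

/-!
A support functional `f` of `x` satisfies `f ≤ ‖·‖` with equality at `x`, so it vanishes on every
`z` with `‖x + z‖ ≤ ‖x‖` and `‖x - z‖ ≤ ‖x‖`. If `n₀` is the only coordinate where `‖x n‖ = ‖x‖`,
then, since `‖x n‖ → 0`, the other coordinates stay below some `r < ‖x‖`, so all small `z` with
`z n₀ = 0` are such directions: every support functional of `x` factors through the projection
onto `E n₀` and comes from a support functional of `x n₀`. If two coordinates `m ≠ n` attain
`‖x‖`, support functionals of `x m` and `x n` lifted through the two projections differ.
-/

open scoped Topology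

section SupportFunctional

variable {F G : Type*} [NormedAddCommGroup F] [NormedSpace ℝ F]
  [NormedAddCommGroup G] [NormedSpace ℝ G]

def IsSupportFunctional (f : F →L[ℝ] ℝ) (x : F) : Prop :=
  ‖f‖ = 1 ∧ f x = ‖x‖

lemma IsSupportFunctional.of_norm_le_one {f : F →L[ℝ] ℝ} {x : F} (hf : ‖f‖ ≤ 1)
    (hfx : f x = ‖x‖) (hx : x ≠ 0) : IsSupportFunctional f x := by
  refine ⟨hf.antisymm ?_, hfx⟩
  have hle : 1 * ‖x‖ ≤ ‖f‖ * ‖x‖ := by simpa [hfx] using f.le_opNorm x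
  exact le_of_mul_le_mul_right hle (norm_pos_iff.mpr hx)

lemma exists_isSupportFunctional {x : F} (hx : x ≠ 0) :
    ∃ f : F →L[ℝ] ℝ, IsSupportFunctional f x :=
  exists_dual_vector ℝ x (norm_ne_zero_iff.mpr hx)

lemma IsSupportFunctional.comp {f : F →L[ℝ] ℝ} {T : G →L[ℝ] F} {x : G}
    (hf : IsSupportFunctional f (T x)) (hT : ‖T‖ ≤ 1) (hTx : ‖T x‖ = ‖x‖) (hx : x ≠ 0) :
    IsSupportFunctional (f ∘L T) x :=
  .of_norm_le_one ((f.opNorm_comp_le T).trans (by simpa [hf.1] using hT))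
    (by simp [hf.2, hTx]) hx

lemma IsSupportFunctional.apply_eq_zero {f : F →L[ℝ] ℝ} {x y : F}
    (hf : IsSupportFunctional f x) (hadd : ‖x + y‖ ≤ ‖x‖) (hsub : ‖x - y‖ ≤ ‖x‖) :
    f y = 0 := by
  have hle : ∀ z, f z ≤ ‖z‖ := fun z => by
    simpa [hf.1] using (Real.le_norm_self (f z)).trans (f.le_opNorm z)
  have h₁ := (hle (x + y)).trans hadd
  have h₂ := (hle (x - y)).trans hsub
  rw [map_add, hf.2] at h₁
  rw [map_sub, hf.2] at h₂
  linarith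

end SupportFunctional

lemma exists_lt_forall_le_of_tendsto_zero {ι : Type*} {u : ι → ℝ}
    (hu : Tendsto u cofinite (𝓝 0)) {c : ℝ} (hc : 0 < c) {s : Set ι}
    (h : ∀ i ∈ s, u i < c) : ∃ r < c, ∀ i ∈ s, u i ≤ r := by
  classical
  have hfin : (s ∩ {i | ¬ u i < c / 2}).Finite :=
    (eventually_cofinite.mp (hu.eventually (gt_mem_nhds (half_pos hc)))).inter_of_right s
  set t := insert (c / 2) (hfin.toFinset.image u)
  refine ⟨t.max' (Finset.insert_nonempty _ _), ?_, fun i hi => ?_⟩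
  · refine (Finset.max'_lt_iff _ _).mpr fun y hy => ?_
    rcases Finset.mem_insert.mp hy with rfl | hy
    · exact half_lt_self hc
    · obtain ⟨i, hi, rfl⟩ := Finset.mem_image.mp hy
      exact h i (hfin.mem_toFinset.mp hi).1
  · by_cases hic : u i < c / 2
    · exact hic.le.trans (t.le_max' _ (Finset.mem_insert_self _ _))
    · exact t.le_max' _ (Finset.mem_insert_of_mem
        (Finset.mem_image_of_mem u (hfin.mem_toFinset.mpr ⟨hi, hic⟩)))

namespace c0Sum

variable {E : ℕ → Type*} [∀ n, NormedAddCommGroup (E n)] [∀ n, NormedSpace ℝ (E n)]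

lemma tendsto_norm_apply (x : c0Sum E) :
    Tendsto (fun n => ‖(x : lp E ∞) n‖) cofinite (𝓝 0) :=
  Nat.cofinite_eq_atTop ▸ x.2

lemma norm_apply_le (x : c0Sum E) (n : ℕ) : ‖(x : lp E ∞) n‖ ≤ ‖x‖ :=
  lp.norm_apply_le_norm ENNReal.top_ne_zero _ n

lemma norm_le_of_forall_le {x : c0Sum E} {C : ℝ} (h : ∀ n, ‖(x : lp E ∞) n‖ ≤ C) :
    ‖x‖ ≤ C :=
  lp.norm_le_of_forall_le' C h

lemma single_mem (n : ℕ) (v : E n) : lp.single ∞ n v ∈ c0Sum E := by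
  refine tendsto_const_nhds.congr' ?_
  filter_upwards [eventually_gt_atTop n] with m hm
  rw [lp.single_apply_ne _ _ _ hm.ne', norm_zero]

noncomputable def single (n : ℕ) : E n →L[ℝ] c0Sum E :=
  (lp.singleContinuousLinearMap ℝ E ∞ n).codRestrict (c0Sum E) (single_mem n)

noncomputable def proj (n : ℕ) : c0Sum E →L[ℝ] E n :=
  (lp.evalCLM ℝ E ∞ n).comp (c0Sum E).subtypeL

@[simp] lemma coe_single (n : ℕ) (v : E n) : (single n v : lp E ∞) = lp.single ∞ n v := rfl

@[simp] lemma proj_apply (n : ℕ) (x : c0Sum E) : proj n x = (x : lp E ∞) n := rfl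

lemma proj_comp_single (n : ℕ) : (proj n).comp (single n) = ContinuousLinearMap.id ℝ (E n) := by
  ext v
  simp

lemma norm_single_apply (n : ℕ) (v : E n) : ‖single n v‖ = ‖v‖ := by
  rw [Submodule.coe_norm, coe_single, lp.norm_single ENNReal.zero_lt_top]

lemma norm_single_le (n : ℕ) : ‖(single n : E n →L[ℝ] c0Sum E)‖ ≤ 1 :=
  ContinuousLinearMap.opNorm_le_bound _ zero_le_one fun v => by
    rw [one_mul, norm_single_apply]

lemma norm_proj_le (n : ℕ) : ‖(proj n : c0Sum E →L[ℝ] E n)‖ ≤ 1 :=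
  ContinuousLinearMap.opNorm_le_bound _ zero_le_one fun x => by
    simpa using norm_apply_le x n

lemma comp_proj_injective (n : ℕ) :
    Function.Injective fun g : E n →L[ℝ] ℝ => g ∘L proj n := fun g g' h => by
  simpa [ContinuousLinearMap.comp_assoc, proj_comp_single] using congr($h ∘L single n)

lemma exists_norm_apply_eq (x : c0Sum E) : ∃ n, ‖(x : lp E ∞) n‖ = ‖x‖ := by
  by_contra! hne
  have hlt : ∀ n, ‖(x : lp E ∞) n‖ < ‖x‖ := fun n => (norm_apply_le x n).lt_of_ne (hne n)
  obtain ⟨r, hr, hle⟩ := exists_lt_forall_le_of_tendsto_zero (tendsto_norm_apply x)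
    ((norm_nonneg _).trans_lt (hlt 0)) (s := Set.univ) fun n _ => hlt n
  exact (norm_le_of_forall_le fun n => hle n trivial).not_gt hr

lemma norm_add_le_of_apply_eq_zero {x z : c0Sum E} {n₀ : ℕ} {r : ℝ}
    (hr : ∀ n ≠ n₀, ‖(x : lp E ∞) n‖ ≤ r) (hz₀ : (z : lp E ∞) n₀ = 0) (hz : ‖z‖ ≤ ‖x‖ - r) :
    ‖x + z‖ ≤ ‖x‖ := by
  refine norm_le_of_forall_le fun n => ?_
  rcases eq_or_ne n n₀ with rfl | hn
  · simpa [hz₀] using norm_apply_le x n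
  · calc ‖((x + z : c0Sum E) : lp E ∞) n‖ ≤ ‖(x : lp E ∞) n‖ + ‖(z : lp E ∞) n‖ := by
          simpa using norm_add_le ((x : lp E ∞) n) ((z : lp E ∞) n)
      _ ≤ r + (‖x‖ - r) := add_le_add (hr n hn) ((norm_apply_le z n).trans hz)
      _ = ‖x‖ := by ring

section StrictMax

variable {x : c0Sum E} {n₀ : ℕ} (hlt : ∀ n ≠ n₀, ‖(x : lp E ∞) n‖ < ‖x‖)
include hlt

lemma norm_pos_of_forall_ne_norm_apply_lt : 0 < ‖x‖ :=
  (norm_nonneg _).trans_lt (hlt (n₀ + 1) n₀.succ_ne_self)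

lemma norm_apply_eq_of_forall_ne_norm_apply_lt : ‖(x : lp E ∞) n₀‖ = ‖x‖ := by
  obtain ⟨m, hm⟩ := exists_norm_apply_eq x
  obtain rfl | hne := eq_or_ne m n₀
  · exact hm
  · exact absurd hm (hlt m hne).ne

end StrictMax

end c0Sum

section SupportFunctionalC0Sum

open c0Sum

variable {E : ℕ → Type*} [∀ n, NormedAddCommGroup (E n)] [∀ n, NormedSpace ℝ (E n)]
  {x : c0Sum E} {n₀ : ℕ}

lemma IsSupportFunctional.comp_proj {g : E n₀ →L[ℝ] ℝ}
    (hg : IsSupportFunctional g ((x : lp E ∞) n₀)) (hn₀ : ‖(x : lp E ∞) n₀‖ = ‖x‖)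
    (hx : x ≠ 0) : IsSupportFunctional (g ∘L proj n₀) x :=
  hg.comp (norm_proj_le n₀) hn₀ hx

lemma IsSupportFunctional.apply_eq_zero_of_apply_eq_zero {f : c0Sum E →L[ℝ] ℝ}
    (hf : IsSupportFunctional f x) (hlt : ∀ n ≠ n₀, ‖(x : lp E ∞) n‖ < ‖x‖) {z : c0Sum E}
    (hz₀ : (z : lp E ∞) n₀ = 0) : f z = 0 := by
  obtain ⟨r, hr, hle⟩ := exists_lt_forall_le_of_tendsto_zero (tendsto_norm_apply x)
    (norm_pos_of_forall_ne_norm_apply_lt hlt) (s := {n₀}ᶜ) hlt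
  set δ := (‖x‖ - r) / (‖z‖ + 1)
  have hδ : 0 < δ := div_pos (sub_pos.mpr hr) (by positivity)
  have hδz : ‖δ • z‖ ≤ ‖x‖ - r := by
    rw [norm_smul, Real.norm_of_nonneg hδ.le, div_mul_eq_mul_div, div_le_iff₀ (by positivity)]
    nlinarith [norm_nonneg z]
  have htz₀ (t : ℝ) : ((t • z : c0Sum E) : lp E ∞) n₀ = 0 := by
    simp only [Submodule.coe_smul, lp.coeFn_smul, Pi.smul_apply, hz₀, smul_zero]
  have hadd := norm_add_le_of_apply_eq_zero hle (htz₀ δ) hδz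
  have hsub := norm_add_le_of_apply_eq_zero hle (htz₀ (-δ))
    (by rwa [norm_smul, norm_neg, ← norm_smul])
  rw [neg_smul, ← sub_eq_add_neg] at hsub
  simpa [hδ.ne'] using hf.apply_eq_zero hadd hsub

lemma IsSupportFunctional.eq_comp_single_comp_proj {f : c0Sum E →L[ℝ] ℝ}
    (hf : IsSupportFunctional f x) (hlt : ∀ n ≠ n₀, ‖(x : lp E ∞) n‖ < ‖x‖) :
    f = (f ∘L single n₀) ∘L proj n₀ := by
  ext y
  have := hf.apply_eq_zero_of_apply_eq_zero hlt (z := y - single n₀ ((y : lp E ∞) n₀))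
    (by simp)
  simpa [sub_eq_zero] using this

lemma IsSupportFunctional.comp_single {f : c0Sum E →L[ℝ] ℝ} (hf : IsSupportFunctional f x)
    (hlt : ∀ n ≠ n₀, ‖(x : lp E ∞) n‖ < ‖x‖) :
    IsSupportFunctional (f ∘L single n₀) ((x : lp E ∞) n₀) := by
  have hn₀ := norm_apply_eq_of_forall_ne_norm_apply_lt hlt
  refine .of_norm_le_one ?_ ?_
    (norm_pos_iff.mp (hn₀ ▸ norm_pos_of_forall_ne_norm_apply_lt hlt))
  · simpa [hf.1] using (f.opNorm_comp_le (single n₀)).trans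
      (mul_le_of_le_one_right (norm_nonneg f) (norm_single_le n₀))
  · rw [hn₀, ← hf.2, ← proj_apply]
    exact congr($(hf.eq_comp_single_comp_proj hlt) x).symm

lemma existsUnique_isSupportFunctional_of_forall_ne_norm_apply_lt
    (hlt : ∀ n ≠ n₀, ‖(x : lp E ∞) n‖ < ‖x‖)
    (h : ∃! g : E n₀ →L[ℝ] ℝ, IsSupportFunctional g ((x : lp E ∞) n₀)) :
    ∃! f : c0Sum E →L[ℝ] ℝ, IsSupportFunctional f x := by
  obtain ⟨g, hg, hg_unique⟩ := h
  have hx : x ≠ 0 := norm_pos_iff.mp (norm_pos_of_forall_ne_norm_apply_lt hlt)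
  refine ⟨g ∘L proj n₀, hg.comp_proj (norm_apply_eq_of_forall_ne_norm_apply_lt hlt) hx,
    fun f hf => ?_⟩
  rw [hf.eq_comp_single_comp_proj hlt, hg_unique _ (hf.comp_single hlt)]

lemma existsUnique_isSupportFunctional_apply (hx : x ≠ 0) (hn₀ : ‖(x : lp E ∞) n₀‖ = ‖x‖)
    (h : ∃! f : c0Sum E →L[ℝ] ℝ, IsSupportFunctional f x) :
    ∃! g : E n₀ →L[ℝ] ℝ, IsSupportFunctional g ((x : lp E ∞) n₀) := by
  have hxn₀ : (x : lp E ∞) n₀ ≠ 0 := norm_ne_zero_iff.mp (hn₀ ▸ norm_ne_zero_iff.mpr hx)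
  obtain ⟨g, hg⟩ := exists_isSupportFunctional hxn₀
  exact ⟨g, hg, fun g' hg' =>
    comp_proj_injective n₀ (h.unique (hg'.comp_proj hn₀ hx) (hg.comp_proj hn₀ hx))⟩

lemma not_existsUnique_isSupportFunctional_of_norm_apply_eq (hx : x ≠ 0) {m n : ℕ}
    (hmn : m ≠ n) (hm : ‖(x : lp E ∞) m‖ = ‖x‖) (hn : ‖(x : lp E ∞) n‖ = ‖x‖) :
    ¬ ∃! f : c0Sum E →L[ℝ] ℝ, IsSupportFunctional f x := by
  intro h
  have hx' : ‖x‖ ≠ 0 := norm_ne_zero_iff.mpr hx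
  obtain ⟨g, hg⟩ := exists_isSupportFunctional (norm_ne_zero_iff.mp (hm ▸ hx'))
  obtain ⟨g', hg'⟩ := exists_isSupportFunctional (norm_ne_zero_iff.mp (hn ▸ hx'))
  have heq := congr($(h.unique (hg.comp_proj hm hx) (hg'.comp_proj hn hx))
    (single n ((x : lp E ∞) n)))
  simp only [ContinuousLinearMap.comp_apply, proj_apply, coe_single,
    lp.single_apply_ne _ _ _ hmn, lp.single_apply_self, map_zero, hg'.2, hn] at heq
  exact hx' heq.symm

end SupportFunctionalC0Sum

/-- A nonzero element `x = (x_n)` of the c₀-direct sum ⊕_0 E_n is smooth (has a unique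
norm-one support functional) iff there is an index `n₀` such that `‖x_n‖ < ‖x‖` for all
`n ≠ n₀` and `x_{n₀}` is a smooth point of `E_{n₀}`. -/
theorem stmt14 (E : ℕ → Type*) [∀ n, NormedAddCommGroup (E n)]
    [∀ n, NormedSpace ℝ (E n)]
    (x : c0Sum E) (hx : x ≠ 0) :
    (∃! f : (c0Sum E) →L[ℝ] ℝ, ‖f‖ = 1 ∧ f x = ‖x‖) ↔
      ∃ n₀, (∀ n, n ≠ n₀ → ‖(x : lp E ∞) n‖ < ‖x‖) ∧
        ∃! g : E n₀ →L[ℝ] ℝ, ‖g‖ = 1 ∧ g ((x : lp E ∞) n₀) = ‖(x : lp E ∞) n₀‖ := by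
  refine ⟨fun h => ?_, fun ⟨n₀, hlt, h⟩ =>
    existsUnique_isSupportFunctional_of_forall_ne_norm_apply_lt hlt h⟩
  obtain ⟨n₀, hn₀⟩ := c0Sum.exists_norm_apply_eq x
  refine ⟨n₀, fun n hn => (c0Sum.norm_apply_le x n).lt_of_ne fun hn' => ?_,
    existsUnique_isSupportFunctional_apply hx hn₀ h⟩
  exact not_existsUnique_isSupportFunctional_of_norm_apply_eq hx hn hn' hn₀ h
end

section
/- Let x = (x_n), y = (y_n) ∈ ⊕_1 X_n with x ≠ 0. Then x is Birkhoff-James orthogonal to y if and only if there exist f_n ∈ J(x_n) for each n with x_n ≠ 0 such that |∑_{x_n ≠ 0} f_n(y_n)| ≤ ∑_{x_n = 0} ‖y_n‖. -/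
open scoped ENNReal

/-- Birkhoff-James orthogonality: `u ⊥_B v` iff `‖u + c • v‖ ≥ ‖u‖` for every scalar. -/
def BJOrth {X : Type*} [NormedAddCommGroup X] [NormedSpace ℝ X] (u v : X) : Prop :=
  ∀ c : ℝ, ‖u‖ ≤ ‖u + c • v‖

/-!
Orthogonality `x ⊥_B y` means that `x` has norm `‖x‖` in the quotient by `ℝ ∙ y`, so Hahn-Banach
there gives a norm-one functional `F` with `F x = ‖x‖` and `F y = 0`. On `⊕_1 E_n` the restrictions
`f_n` of `F` to the summands have norm at most one and `∑ f_n (x_n) = ‖x‖ = ∑ ‖x_n‖`, which forces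
`f_n (x_n) = ‖x_n‖` for every `n`; splitting `0 = ∑ f_n (y_n)` along `x_n ≠ 0` and `x_n = 0` gives
the inequality. Conversely, `‖x_n + c y_n‖ ≥ ‖x_n‖ + c f_n (y_n)` where `x_n ≠ 0` and
`‖x_n + c y_n‖ = |c| ‖y_n‖` where `x_n = 0`, so `‖x + c y‖ ≥ ‖x‖ + c A + |c| S ≥ ‖x‖`, with `A` and
`S` the two sides of the inequality.
-/

section Dual

variable {X : Type*} [NormedAddCommGroup X] [NormedSpace ℝ X]

theorem ContinuousLinearMap.norm_apply_le_of_norm_le_one {f : StrongDual ℝ X} (hf : ‖f‖ ≤ 1)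
    (u : X) : ‖f u‖ ≤ ‖u‖ := by
  simpa using f.le_of_opNorm_le hf u

theorem ContinuousLinearMap.norm_eq_one_of_apply_eq_norm {f : StrongDual ℝ X} {u : X}
    (hf : ‖f‖ ≤ 1) (hfu : f u = ‖u‖) (hu : u ≠ 0) : ‖f‖ = 1 := by
  refine le_antisymm hf (le_of_mul_le_mul_right ?_ (norm_pos_iff.2 hu))
  simpa [hfu] using f.le_opNorm u

theorem ContinuousLinearMap.norm_add_mul_apply_le {f : StrongDual ℝ X} {u : X}
    (hf : ‖f‖ ≤ 1) (hfu : f u = ‖u‖) (v : X) (c : ℝ) : ‖u‖ + c * f v ≤ ‖u + c • v‖ := by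
  simpa [hfu] using (Real.le_norm_self _).trans (f.norm_apply_le_of_norm_le_one hf (u + c • v))

theorem BJOrth.exists_dual {u v : X} (h : BJOrth u v) (hu : u ≠ 0) :
    ∃ F : StrongDual ℝ X, ‖F‖ = 1 ∧ F u = ‖u‖ ∧ F v = 0 := by
  set K := ℝ ∙ v
  have hmk : ‖(Submodule.Quotient.mk u : X ⧸ K)‖ = ‖u‖ := by
    refine le_antisymm (Submodule.Quotient.norm_mk_le K u)
      (QuotientAddGroup.le_norm_iff.2 fun m hm => ?_)
    obtain ⟨t, ht⟩ := Submodule.mem_span_singleton.1 ((Submodule.Quotient.eq K).1 hm)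
    rw [← sub_add_cancel m u, ← ht, add_comm]
    exact h t
  obtain ⟨g, hg, hgu⟩ := exists_dual_vector ℝ (Submodule.Quotient.mk u : X ⧸ K)
    (hmk ▸ norm_ne_zero_iff.2 hu)
  set F := g.comp K.mkQL
  have hFu : F u = ‖u‖ := by simpa [F, hmk] using hgu
  have hF : ‖F‖ ≤ 1 := F.opNorm_le_bound zero_le_one fun z =>
    (g.le_opNorm _).trans (by simpa [hg] using Submodule.Quotient.norm_mk_le K z)
  refine ⟨F, F.norm_eq_one_of_apply_eq_norm hF hFu hu, hFu, ?_⟩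
  simp [F, (Submodule.Quotient.mk_eq_zero K).2 (Submodule.mem_span_singleton_self v)]

end Dual

theorem tsum_eq_tsum_ne_zero_add_tsum_eq_zero {ι : Type*} {M : ι → Type*} [∀ i, Zero (M i)]
    (z : ∀ i, M i) {g : ι → ℝ} (hg : Summable g) :
    ∑' i, g i = ∑' i : {i // z i ≠ 0}, g i + ∑' i : {i // z i = 0}, g i := by
  rw [add_comm]
  exact (hg.tsum_subtype_add_tsum_subtype_compl {i | z i = 0}).symm

namespace lp

variable {ι : Type*} {E : ι → Type*} [∀ i, NormedAddCommGroup (E i)]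

theorem summable_norm_one (z : lp E 1) : Summable fun i => ‖z i‖ := by
  simpa using (lp.memℓp z).summable (p := 1) (by norm_num)

theorem norm_one_eq_tsum (z : lp E 1) : ‖z‖ = ∑' i, ‖z i‖ := by
  simp [lp.norm_eq_tsum_rpow (p := 1) (by norm_num) z]

variable [∀ i, NormedSpace ℝ (E i)]

theorem exists_dual_components_of_bjOrth {x y : lp E 1} (h : BJOrth x y) (hx : x ≠ 0) :
    ∃ f : ∀ i, StrongDual ℝ (E i), (∀ i, ‖f i‖ ≤ 1) ∧ (∀ i, f i (x i) = ‖x i‖) ∧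
      HasSum (fun i => f i (y i)) 0 := by
  classical
  obtain ⟨F, hF, hFx, hFy⟩ := h.exists_dual hx
  set f := fun i => F.comp (lp.singleContinuousLinearMap ℝ E 1 i)
  have hsum : ∀ z : lp E 1, HasSum (fun i => f i (z i)) (F z) := fun z =>
    (lp.hasSum_single ENNReal.one_ne_top z).mapL F
  have hf : ∀ i, ‖f i‖ ≤ 1 := fun i => ContinuousLinearMap.opNorm_le_bound _ zero_le_one fun a =>
    (F.le_opNorm _).trans (by simp [hF])
  have hfx : ∀ i, f i (x i) ≤ ‖x i‖ := fun i =>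
    (Real.le_norm_self _).trans ((f i).norm_apply_le_of_norm_le_one (hf i) (x i))
  have hgap : HasSum (fun i => ‖x i‖ - f i (x i)) 0 := by
    simpa [hFx, norm_one_eq_tsum] using (summable_norm_one x).hasSum.sub (hsum x)
  have hgap_eq := (hasSum_zero_iff_of_nonneg fun i => sub_nonneg.2 (hfx i)).1 hgap
  exact ⟨f, hf, fun i => (sub_eq_zero.1 (congr_fun hgap_eq i)).symm, hFy ▸ hsum y⟩

theorem bjOrth_of_dual_components {x y : lp E 1} (f : ∀ i, StrongDual ℝ (E i))
    (hf : ∀ i, x i ≠ 0 → ‖f i‖ ≤ 1 ∧ f i (x i) = ‖x i‖)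
    (hfy : |∑' i : {i // x i ≠ 0}, f i (y i)| ≤ ∑' i : {i // x i = 0}, ‖y i‖) :
    BJOrth x y := by
  intro c
  set A := ∑' i : {i // x i ≠ 0}, f i (y i)
  set S := ∑' i : {i // x i = 0}, ‖y i‖
  have hxs : Summable fun i : {i // x i ≠ 0} => ‖x i‖ := (summable_norm_one x).subtype _
  have hfys : Summable fun i : {i // x i ≠ 0} => f i (y i) :=
    ((summable_norm_one y).subtype _).of_norm_bounded fun i =>
      (f i).norm_apply_le_of_norm_le_one (hf i i.2).1 (y i)
  have hcoe : ∀ i, (x + c • y) i = x i + c • y i := fun _ => rfl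
  have hsupp : ∀ i : {i // x i ≠ 0}, ‖x i‖ + c * f i (y i) ≤ ‖(x + c • y) i‖ := fun i =>
    hcoe i ▸ (f i).norm_add_mul_apply_le (hf i i.2).1 (hf i i.2).2 (y i) c
  have hzero : ∀ i : {i // x i = 0}, ‖(x + c • y) i‖ = |c| * ‖y i‖ := fun i => by
    rw [hcoe, i.2, zero_add, norm_smul, Real.norm_eq_abs]
  have hx : ‖x‖ = ∑' i : {i // x i ≠ 0}, ‖x i‖ :=
    (norm_one_eq_tsum x).trans (tsum_subtype_eq_of_support_subset (s := {i | x i ≠ 0})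
      fun i hi => by simpa using hi).symm
  have hxcy := summable_norm_one (x + c • y)
  calc ‖x‖ ≤ ‖x‖ + c * A + |c| * S := by
        have : |c * A| ≤ |c| * S := by rw [abs_mul]; gcongr
        linarith [neg_abs_le (c * A)]
    _ = ∑' i : {i // x i ≠ 0}, (‖x i‖ + c * f i (y i)) +
          ∑' i : {i // x i = 0}, ‖(x + c • y) i‖ := by
        rw [hxs.tsum_add (hfys.mul_left c), tsum_congr hzero, tsum_mul_left, tsum_mul_left, hx]
    _ ≤ ∑' i : {i // x i ≠ 0}, ‖(x + c • y) i‖ + ∑' i : {i // x i = 0}, ‖(x + c • y) i‖ :=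
        add_le_add_left (Summable.tsum_le_tsum hsupp (hxs.add (hfys.mul_left c))
          (hxcy.subtype _)) _
    _ = ‖x + c • y‖ := by
        rw [norm_one_eq_tsum, tsum_eq_tsum_ne_zero_add_tsum_eq_zero x hxcy]

end lp

/-- For a nonzero `x = (x_n)` and any `y = (y_n)` in ⊕_1 E_n, `x ⊥_B y` iff there exist
norm-one support functionals `f_n` of `x_n` (for the indices with `x_n ≠ 0`) such that
`|∑_{x_n ≠ 0} f_n(y_n)| ≤ ∑_{x_n = 0} ‖y_n‖`. -/
theorem stmt16 (E : ℕ → Type*) [∀ n, NormedAddCommGroup (E n)]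
    [∀ n, NormedSpace ℝ (E n)]
    (x y : lp E 1) (hx : x ≠ 0) :
    BJOrth x y ↔
      ∃ f : ∀ n, E n →L[ℝ] ℝ,
        (∀ n, x n ≠ 0 → ‖f n‖ = 1 ∧ f n (x n) = ‖x n‖) ∧
        |∑' m : {n // x n ≠ 0}, f m (y m)| ≤ ∑' m : {n // x n = 0}, ‖y m‖ := by
  refine ⟨fun h => ?_, fun ⟨f, hf, hfy⟩ =>
    lp.bjOrth_of_dual_components f (fun n hn => ⟨(hf n hn).1.le, (hf n hn).2⟩) hfy⟩
  obtain ⟨f, hf, hfx, hfy⟩ := lp.exists_dual_components_of_bjOrth h hx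
  refine ⟨f, fun n hn => ⟨(f n).norm_eq_one_of_apply_eq_norm (hf n) (hfx n) hn, hfx n⟩, ?_⟩
  have hsplit := tsum_eq_tsum_ne_zero_add_tsum_eq_zero x hfy.summable
  rw [hfy.tsum_eq, eq_comm, add_eq_zero_iff_eq_neg] at hsplit
  rw [hsplit, abs_neg]
  have hys : Summable fun i : {n // x n = 0} => ‖y i‖ := (lp.summable_norm_one y).subtype _
  exact tsum_of_norm_bounded hys.hasSum fun i => (f i).norm_apply_le_of_norm_le_one (hf i) (y i)
end

section
/- Let 1 < p < ∞ and let x = (x_n) ∈ ⊕_p X_n have x_n = 0 for all n ≠ n_0 with x_{n_0} ≠ 0. Then for any y = (y_n) ∈ ⊕_p X_n: x ⊥_B y if and only if x_{n_0} ⊥_B y_{n_0}, and y ⊥_B x if and only if y_{n_0} ⊥_B x_{n_0}. -/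
open scoped ENNReal

/-!
In `ℓ_p` one has `‖f‖^p = ‖f n₀‖^p + ‖f - e_{n₀}(f n₀)‖^p`. As `x` lives on the coordinate `n₀`,
`‖y + c x‖^p` and `‖y n₀ + c x n₀‖^p` differ by a constant, which gives the second equivalence,
while `‖x + c y‖^p = ‖x n₀ + c y n₀‖^p + |c|^p M`. If `‖x n₀ + c y n₀‖ < ‖x n₀‖`, convexity makes
`‖x n₀ + t c y n₀‖^p` drop at a linear rate in `t`, which beats the perturbation `t^p |c|^p M`
for small `t > 0` because `p > 1`.
-/

open Filter Topology

lemma exists_rpow_mul_lt_mul {p : ℝ} (hp : 1 < p) (A : ℝ) {D : ℝ} (hD : 0 < D) :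
    ∃ t : ℝ, 0 < t ∧ t ≤ 1 ∧ t ^ p * A < t * D := by
  have hlim : Tendsto (fun t : ℝ => t ^ (p - 1) * A) (𝓝[>] 0) (𝓝 0) := by
    have := (Real.continuousAt_rpow_const 0 (p - 1) (Or.inr (by linarith))).tendsto.mul_const A
    rw [Real.zero_rpow (by linarith), zero_mul] at this
    exact this.mono_left nhdsWithin_le_nhds
  obtain ⟨t, hlt, ht0, ht1⟩ :=
    ((hlim.eventually (gt_mem_nhds hD)).and (Ioc_mem_nhdsGT one_pos)).exists
  refine ⟨t, ht0, ht1, ?_⟩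
  calc t ^ p * A = t * (t ^ (p - 1) * A) := by
        rw [Real.rpow_sub ht0, Real.rpow_one]; field_simp
    _ < t * D := mul_lt_mul_of_pos_left hlt ht0

section BirkhoffJames

variable {X Y : Type*} [NormedAddCommGroup X] [NormedSpace ℝ X]
  [NormedAddCommGroup Y] [NormedSpace ℝ Y]

lemma norm_add_smul_rpow_le {p : ℝ} (hp : 1 ≤ p) (u w : X) {t : ℝ} (ht0 : 0 ≤ t) (ht1 : t ≤ 1) :
    ‖u + t • w‖ ^ p ≤ (1 - t) * ‖u‖ ^ p + t * ‖u + w‖ ^ p := by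
  have hconv : ‖u + t • w‖ ≤ (1 - t) * ‖u‖ + t * ‖u + w‖ :=
    calc ‖u + t • w‖ = ‖(1 - t) • u + t • (u + w)‖ := by
          rw [smul_add, sub_smul, one_smul]; abel_nf
      _ ≤ (1 - t) * ‖u‖ + t * ‖u + w‖ := by
          refine (norm_add_le _ _).trans_eq ?_
          rw [norm_smul, norm_smul, Real.norm_of_nonneg (by linarith), Real.norm_of_nonneg ht0]
  calc ‖u + t • w‖ ^ p ≤ ((1 - t) * ‖u‖ + t * ‖u + w‖) ^ p :=
        Real.rpow_le_rpow (norm_nonneg _) hconv (by linarith)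
    _ ≤ (1 - t) * ‖u‖ ^ p + t * ‖u + w‖ ^ p :=
        (convexOn_rpow hp).2 (norm_nonneg u) (norm_nonneg _) (by linarith) ht0 (by ring)

lemma bjOrth_iff_of_norm_add_smul_rpow_eq_add_const {p : ℝ} (hp : 0 < p) {u v : X} {x y : Y}
    (K : ℝ) (h : ∀ c : ℝ, ‖x + c • y‖ ^ p = ‖u + c • v‖ ^ p + K) :
    BJOrth x y ↔ BJOrth u v := by
  refine forall_congr' fun c => ?_
  have h0 := h 0
  simp only [zero_smul, add_zero] at h0
  rw [← Real.rpow_le_rpow_iff (norm_nonneg _) (norm_nonneg _) hp,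
    ← Real.rpow_le_rpow_iff (norm_nonneg _) (norm_nonneg _) hp, h0, h c, add_le_add_iff_right]

lemma bjOrth_iff_of_norm_add_smul_rpow_eq_add_abs_rpow {p : ℝ} (hp : 1 < p) {u v : X} {x y : Y}
    {M : ℝ} (hM : 0 ≤ M) (h : ∀ c : ℝ, ‖x + c • y‖ ^ p = ‖u + c • v‖ ^ p + |c| ^ p * M) :
    BJOrth x y ↔ BJOrth u v := by
  have h0 := h 0
  simp only [zero_smul, add_zero, abs_zero, Real.zero_rpow (by linarith : p ≠ 0), zero_mul]
    at h0
  constructor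
  · intro hxy c
    by_contra! hlt
    have hD : 0 < ‖u‖ ^ p - ‖u + c • v‖ ^ p := by
      have := Real.rpow_lt_rpow (norm_nonneg _) hlt (by linarith : 0 < p)
      linarith
    obtain ⟨t, ht0, ht1, hsmall⟩ := exists_rpow_mul_lt_mul hp (|c| ^ p * M) hD
    have hconv := norm_add_smul_rpow_le hp.le u (c • v) ht0.le ht1
    have hxt := Real.rpow_le_rpow (norm_nonneg _) (hxy (t * c)) (by linarith : 0 ≤ p)
    rw [h0, h (t * c), abs_mul, abs_of_pos ht0, Real.mul_rpow ht0.le (abs_nonneg c),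
      mul_smul] at hxt
    linarith
  · intro huv c
    rw [← Real.rpow_le_rpow_iff (norm_nonneg _) (norm_nonneg _) (by linarith : 0 < p), h0, h c]
    have := Real.rpow_le_rpow (norm_nonneg _) (huv c) (by linarith : 0 ≤ p)
    have : 0 ≤ |c| ^ p * M := by positivity
    linarith

end BirkhoffJames

namespace lp

variable {α : Type*} [DecidableEq α] {E : α → Type*} [∀ i, NormedAddCommGroup (E i)]
  {p : ℝ≥0∞}

lemma norm_rpow_eq_norm_apply_rpow_add (hp : 0 < p.toReal) (f : lp E p) (i : α) :
    ‖f‖ ^ p.toReal = ‖f i‖ ^ p.toReal + ‖f - lp.single p i (f i)‖ ^ p.toReal := by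
  have := lp.norm_sub_norm_compl_sub_single hp f {i}
  rw [Finset.sum_singleton, Finset.sum_singleton] at this
  linarith

lemma add_smul_sub_single [∀ i, NormedSpace ℝ (E i)] [Fact (1 ≤ p)] (f g : lp E p) (c : ℝ)
    (i : α) :
    f + c • g - lp.single p i ((f + c • g) i) =
      (f - lp.single p i (f i)) + c • (g - lp.single p i (g i)) := by
  rw [lp.coeFn_add, lp.coeFn_smul, Pi.add_apply, Pi.smul_apply, lp.single_add, lp.single_smul,
    smul_sub]
  abel

end lp

theorem stmt17_general (E : ℕ → Type*) [∀ n, NormedAddCommGroup (E n)]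
    [∀ n, NormedSpace ℝ (E n)]
    (p : ℝ) (hp : 1 < p) [Fact (1 ≤ ENNReal.ofReal p)]
    (x : lp E (ENNReal.ofReal p)) (n₀ : ℕ)
    (hsupp : ∀ n, n ≠ n₀ → x n = 0)
    (y : lp E (ENNReal.ofReal p)) :
    (BJOrth x y ↔ BJOrth (x n₀) (y n₀)) ∧
    (BJOrth y x ↔ BJOrth (y n₀) (x n₀)) := by
  have hq : 1 < (ENNReal.ofReal p).toReal := by rwa [ENNReal.toReal_ofReal (by linarith)]
  have hx : x - lp.single _ n₀ (x n₀) = 0 := by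
    refine lp.ext (funext fun n => ?_)
    rcases eq_or_ne n n₀ with rfl | hn
    · simp
    · simp [hsupp n hn, Pi.single_eq_of_ne hn]
  have hsplit := lp.norm_rpow_eq_norm_apply_rpow_add (E := E) (one_pos.trans hq)
  set M := ‖y - lp.single _ n₀ (y n₀)‖ ^ (ENNReal.ofReal p).toReal
  constructor
  · refine bjOrth_iff_of_norm_add_smul_rpow_eq_add_abs_rpow hq (by positivity : 0 ≤ M) fun c => ?_
    rw [hsplit, lp.add_smul_sub_single, hx, zero_add, norm_smul, Real.norm_eq_abs,
      Real.mul_rpow (abs_nonneg c) (norm_nonneg _)]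
    rfl
  · refine bjOrth_iff_of_norm_add_smul_rpow_eq_add_const (one_pos.trans hq) M fun c => ?_
    rw [hsplit, lp.add_smul_sub_single, hx, smul_zero, add_zero]
    rfl

/-- For 1 < p < ∞, if `x ∈ ⊕_p E_n` is supported on the single coordinate `n₀` (with
`x_{n₀} ≠ 0`), then for any `y`: `x ⊥_B y` iff `x_{n₀} ⊥_B y_{n₀}`, and `y ⊥_B x` iff
`y_{n₀} ⊥_B x_{n₀}`. -/
theorem stmt17 (E : ℕ → Type*) [∀ n, NormedAddCommGroup (E n)]
    [∀ n, NormedSpace ℝ (E n)]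
    (p : ℝ) (hp : 1 < p) [Fact (1 ≤ ENNReal.ofReal p)]
    (x : lp E (ENNReal.ofReal p)) (n₀ : ℕ)
    (hsupp : ∀ n, n ≠ n₀ → x n = 0) (hne : x n₀ ≠ 0)
    (y : lp E (ENNReal.ofReal p)) :
    (BJOrth x y ↔ BJOrth (x n₀) (y n₀)) ∧
    (BJOrth y x ↔ BJOrth (y n₀) (x n₀)) :=
  stmt17_general E p hp x n₀ hsupp y
end

section
/- The ℓ_1-direct sum ⊕_1 X_n of a sequence of nontrivial normed spaces has no nonzero left-symmetric point; moreover x = (x_n) is a right-symmetric point of ⊕_1 X_n if and only if there is n_0 with x_n = 0 for all n ≠ n_0 and x_{n_0} a right-symmetric point of X_{n_0}. -/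
/-!
Two disjointly supported vectors `u, w` of `ℓ¹` span an isometric copy of the plane `ℓ¹₂`.
In that plane a point `u + t w` whose two coordinates have different weights `‖u‖ ≠ t ‖w‖`
is orthogonal to `y = u - (‖u‖ / ‖w‖) w`, while `y` is not orthogonal to it. Such a pair exists
for every `x ≠ 0`: if `x` has a vanishing coordinate, put a vector there; otherwise split off
one of the first two coordinates, and at most one of these splits is balanced since `x` has a
third nonzero coordinate.

For right-symmetry, splitting off coordinate `i` gives
`‖f + g‖ = ‖f‖ - ‖f i‖ + ‖f i + g i‖` whenever `g` is supported at `i`. If `x` had two nonzero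
coordinates `‖x j‖ ≤ ‖x i‖`, this formula shows that the single vector carrying `x j` is
orthogonal to `x` but not conversely; and for `x` supported at `i` it reduces orthogonality in
both directions to orthogonality in `E i`.
-/

open scoped ENNReal

/-- A left-symmetric point: `x ⊥_B y` implies `y ⊥_B x` for all `y`. -/
def LeftSymPt {X : Type*} [NormedAddCommGroup X] [NormedSpace ℝ X] (x : X) : Prop :=
  ∀ y : X, BJOrth x y → BJOrth y x

/-- A right-symmetric point: `y ⊥_B x` implies `x ⊥_B y` for all `y`. -/
def RightSymPt {X : Type*} [NormedAddCommGroup X] [NormedSpace ℝ X] (x : X) : Prop :=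
  ∀ y : X, BJOrth y x → BJOrth x y

theorem not_leftSymPt_add_smul {X : Type*} [NormedAddCommGroup X] [NormedSpace ℝ X] {u w : X}
    (huw : ∀ a b : ℝ, ‖a • u + b • w‖ = |a| * ‖u‖ + |b| * ‖w‖) (hu : u ≠ 0) (hw : w ≠ 0)
    {t : ℝ} (ht : 0 ≤ t) (hne : ‖u‖ ≠ t * ‖w‖) : ¬ LeftSymPt (u + t • w) := by
  have hu₀ : 0 < ‖u‖ := norm_pos_iff.2 hu
  have hw₀ : 0 < ‖w‖ := norm_pos_iff.2 hw
  set k := ‖u‖ / ‖w‖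
  have hk₀ : 0 < k := div_pos hu₀ hw₀
  have hk : k * ‖w‖ = ‖u‖ := div_mul_cancel₀ _ hw₀.ne'
  have hx : ‖u + t • w‖ = ‖u‖ + t * ‖w‖ := by
    simpa [abs_of_nonneg ht] using huw 1 t
  have hy : ‖u - k • w‖ = 2 * ‖u‖ := by
    have h := huw 1 (-k)
    rw [one_smul, neg_smul, ← sub_eq_add_neg] at h
    rw [h, abs_one, abs_neg, abs_of_pos hk₀, hk]
    ring
  intro hsym
  have hxy : BJOrth (u + t • w) (u - k • w) := by
    intro c
    have h := huw (1 + c) (t - c * k)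
    rw [show (1 + c) • u + (t - c * k) • w = u + t • w + c • (u - k • w) by module] at h
    have hlin : (1 + c) * ‖u‖ + (t - c * k) * ‖w‖ = ‖u‖ + t * ‖w‖ := by
      linear_combination (-c) * hk
    rw [hx, h]
    linarith [mul_le_mul_of_nonneg_right (le_abs_self (1 + c)) hu₀.le,
      mul_le_mul_of_nonneg_right (le_abs_self (t - c * k)) hw₀.le]
  have hyx := hsym _ hxy
  rcases hne.lt_or_gt with hlt | hgt
  · have htw : 0 < t * ‖w‖ := hu₀.trans hlt
    set c := ‖u‖ / (t * ‖w‖)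
    have hc₀ : 0 < c := div_pos hu₀ htw
    have hc₁ : c < 1 := (div_lt_one htw).2 hlt
    have hct : c * t = k := by
      simp only [c, k]
      field_simp [(pos_of_mul_pos_left htw hw₀.le).ne']
    have h := hyx c
    rw [show u - k • w + c • (u + t • w) = (1 + c) • u by
      rw [smul_add, smul_smul, hct]; module, hy, norm_smul, Real.norm_eq_abs,
      abs_of_pos (by linarith)] at h
    nlinarith
  · have h := hyx (-1 / 2)
    rw [show u - k • w + (-1 / 2 : ℝ) • (u + t • w) = (1 / 2 : ℝ) • u + (-(k + t / 2)) • w by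
      module, huw, hy, abs_neg, abs_of_pos (by norm_num), abs_of_pos (by positivity)] at h
    linarith

namespace lp

variable {ι : Type*} {E : ι → Type*} [∀ i, NormedAddCommGroup (E i)]

theorem hasSum_norm_one (f : lp E 1) : HasSum (fun i => ‖f i‖) ‖f‖ := by
  simpa using hasSum_norm (p := 1) (by norm_num) f

theorem norm_add_of_disjoint {f g : lp E 1} (hfg : ∀ i, f i = 0 ∨ g i = 0) :
    ‖f + g‖ = ‖f‖ + ‖g‖ := by
  refine (hasSum_norm_one (f + g)).unique ?_
  convert (hasSum_norm_one f).add (hasSum_norm_one g) using 1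
  funext i
  rcases hfg i with h | h <;> simp [h]

section

variable [∀ i, NormedSpace ℝ (E i)]

theorem norm_smul_add_smul_of_disjoint {f g : lp E 1} (hfg : ∀ i, f i = 0 ∨ g i = 0)
    (a b : ℝ) : ‖a • f + b • g‖ = |a| * ‖f‖ + |b| * ‖g‖ := by
  rw [norm_add_of_disjoint, norm_smul, norm_smul, Real.norm_eq_abs, Real.norm_eq_abs]
  intro i
  rcases hfg i with h | h <;> simp [h]

end

variable [DecidableEq ι]

theorem norm_eq_norm_sub_single_add (f : lp E 1) (i : ι) :
    ‖f‖ = ‖f - lp.single 1 i (f i)‖ + ‖f i‖ := by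
  conv_lhs => rw [← sub_add_cancel f (lp.single 1 i (f i))]
  rw [norm_add_of_disjoint, lp.norm_single one_pos]
  intro j
  by_cases hj : j = i
  · subst hj
    simp
  · simp [hj]

theorem norm_add_of_forall_ne_eq_zero {f g : lp E 1} {i : ι} (hg : ∀ j ≠ i, g j = 0) :
    ‖f + g‖ = ‖f‖ - ‖f i‖ + ‖f i + g i‖ := by
  have herase : f + g - lp.single 1 i ((f + g) i) = f - lp.single 1 i (f i) := by
    ext j
    by_cases hj : j = i
    · subst hj
      simp
    · simp [hj, hg j hj]
  rw [norm_eq_norm_sub_single_add (f + g) i, herase, norm_eq_norm_sub_single_add f i]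
  simp

variable [∀ i, NormedSpace ℝ (E i)]

theorem eq_zero_of_rightSymPt {x : lp E 1} (hx : RightSymPt x) {i j : ι} (hij : i ≠ j)
    (hle : ‖x j‖ ≤ ‖x i‖) : x j = 0 := by
  set y := lp.single 1 j (x j)
  have hy : ∀ k ≠ j, y k = 0 := fun k hk => lp.single_apply_ne 1 j _ hk
  have hxy : ‖x - y‖ = ‖x‖ - ‖x j‖ := by
    rw [norm_eq_norm_sub_single_add x j]
    ring
  have hxi : ‖x i‖ ≤ ‖x‖ - ‖x j‖ := by
    simpa [hy i hij, hxy] using norm_apply_le_norm one_ne_zero (x - y) i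
  have hyx : BJOrth y x := by
    intro c
    rw [add_comm, norm_add_of_forall_ne_eq_zero hy, lp.norm_single one_pos,
      lp.single_apply_self, lp.coeFn_smul, Pi.smul_apply,
      show c • x j + x j = (c + 1) • x j by rw [add_smul, one_smul],
      norm_smul, norm_smul, norm_smul, Real.norm_eq_abs, Real.norm_eq_abs]
    have habs : 1 ≤ |c + 1| + |c| :=
      calc 1 = |(c + 1) - c| := by norm_num
        _ ≤ |c + 1| + |c| := abs_sub _ _
    nlinarith [abs_nonneg c, abs_nonneg (c + 1), norm_nonneg (x j)]
  have h := hx y hyx (-1)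
  rw [neg_one_smul, ← sub_eq_add_neg, hxy] at h
  exact norm_le_zero_iff.1 (by linarith)

theorem exists_forall_ne_eq_zero_of_rightSymPt [Nonempty ι] {x : lp E 1}
    (hx : RightSymPt x) : ∃ i, ∀ j ≠ i, x j = 0 := by
  by_cases h : ∃ i, x i ≠ 0
  · obtain ⟨i, hi⟩ := h
    refine ⟨i, fun j hj => ?_⟩
    rcases le_total ‖x j‖ ‖x i‖ with hle | hle
    · exact eq_zero_of_rightSymPt hx hj.symm hle
    · exact absurd (eq_zero_of_rightSymPt hx hj hle) hi
  · push Not at h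
    exact ⟨Classical.arbitrary ι, fun j _ => h j⟩

theorem rightSymPt_iff_of_forall_ne_eq_zero {x : lp E 1} {i : ι} (hx : ∀ j ≠ i, x j = 0) :
    RightSymPt x ↔ RightSymPt (x i) := by
  have hxi : ‖x‖ = ‖x i‖ := by
    simpa using norm_add_of_forall_ne_eq_zero (f := 0) hx
  have hsmul : ∀ c : ℝ, ∀ j ≠ i, (c • x) j = 0 := fun c j hj => by simp [hx j hj]
  constructor
  · intro h v hv c
    set y := lp.single 1 i v
    have hyx : BJOrth y x := by
      intro d
      rw [norm_add_of_forall_ne_eq_zero (hsmul d)]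
      simpa [y] using hv d
    have hxy := h y hyx c
    rw [norm_add_of_forall_ne_eq_zero (i := i) (g := c • y) (fun j hj => by simp [y, hj]),
      hxi] at hxy
    simpa [y] using hxy
  · intro h y hyx c
    have hyxi : BJOrth (y i) (x i) := by
      intro d
      have hd := hyx d
      rw [norm_add_of_forall_ne_eq_zero (hsmul d)] at hd
      simp only [lp.coeFn_smul, Pi.smul_apply] at hd
      linarith
    have hyi : ‖y i‖ ≤ ‖y‖ := norm_apply_le_norm one_ne_zero y i
    rw [add_comm, norm_add_of_forall_ne_eq_zero hx, hxi, lp.coeFn_smul, Pi.smul_apply,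
      add_comm (c • y i), norm_smul, norm_smul]
    linarith [h _ hyxi c, mul_le_mul_of_nonneg_left hyi (norm_nonneg c)]

theorem not_leftSymPt_of_apply_eq_zero {x : lp E 1} {i : ι} [Nontrivial (E i)] (hx : x ≠ 0)
    (hi : x i = 0) : ¬ LeftSymPt x := by
  obtain ⟨e, he⟩ := exists_ne (0 : E i)
  have hdisj : ∀ j, x j = 0 ∨ lp.single 1 i e j = 0 := fun j => by
    by_cases hj : j = i
    · subst hj
      exact .inl hi
    · exact .inr (lp.single_apply_ne 1 i e hj)
  have hsingle : lp.single 1 i e ≠ 0 := by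
    rw [← norm_ne_zero_iff, lp.norm_single one_pos]
    exact norm_ne_zero_iff.2 he
  simpa using not_leftSymPt_add_smul (norm_smul_add_smul_of_disjoint hdisj) hx hsingle le_rfl
    (by simpa using hx)

theorem not_leftSymPt_of_two_mul_norm_apply_ne {x : lp E 1} {i j : ι} (hij : i ≠ j)
    (hi : x i ≠ 0) (hj : x j ≠ 0) (hne : 2 * ‖x i‖ ≠ ‖x‖) : ¬ LeftSymPt x := by
  set f := lp.single 1 i (x i)
  have hdisj : ∀ k, f k = 0 ∨ (x - f) k = 0 := fun k => by
    by_cases hk : k = i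
    · subst hk
      simp [f]
    · exact .inl (lp.single_apply_ne 1 i _ hk)
  have hf : f ≠ 0 := by
    rw [← norm_ne_zero_iff, lp.norm_single one_pos]
    exact norm_ne_zero_iff.2 hi
  have hg : x - f ≠ 0 := fun h => hj (by simpa [f, hij.symm] using congrArg (fun g => g j) h)
  have hnorm : ‖f‖ ≠ 1 * ‖x - f‖ := by
    rw [one_mul, lp.norm_single one_pos]
    intro h
    exact hne (by linarith [norm_eq_norm_sub_single_add x i])
  simpa using not_leftSymPt_add_smul (norm_smul_add_smul_of_disjoint hdisj) hf hg zero_le_one hnorm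

theorem not_leftSymPt_of_three_apply_ne_zero {x : lp E 1} {i j k : ι} (hij : i ≠ j) (hik : i ≠ k)
    (hjk : j ≠ k) (hi : x i ≠ 0) (hj : x j ≠ 0) (hk : x k ≠ 0) : ¬ LeftSymPt x := by
  by_cases hbal : 2 * ‖x i‖ = ‖x‖ ∧ 2 * ‖x j‖ = ‖x‖
  · have hsum : ‖x i‖ + (‖x j‖ + ‖x k‖) ≤ ‖x‖ := by
      simpa [hij, hik, hjk] using
        sum_le_hasSum {i, j, k} (fun _ _ => norm_nonneg _) (hasSum_norm_one x)
    linarith [norm_pos_iff.2 hk]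
  · rw [not_and_or] at hbal
    rcases hbal with hne | hne
    · exact not_leftSymPt_of_two_mul_norm_apply_ne hij hi hj hne
    · exact not_leftSymPt_of_two_mul_norm_apply_ne hij.symm hj hi hne

end lp

/-- The ℓ_1-direct sum of nontrivial normed spaces has no nonzero left-symmetric point,
and `x = (x_n)` is right-symmetric iff `x` is supported on a single coordinate `n₀` with
`x_{n₀}` a right-symmetric point of `E_{n₀}`. -/
theorem stmt18 (E : ℕ → Type*) [∀ n, NormedAddCommGroup (E n)]
    [∀ n, NormedSpace ℝ (E n)] [∀ n, Nontrivial (E n)] :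
    (∀ x : lp E 1, x ≠ 0 → ¬ LeftSymPt x) ∧
    (∀ x : lp E 1, RightSymPt x ↔
      ∃ n₀, (∀ n, n ≠ n₀ → x n = 0) ∧ RightSymPt (x n₀)) := by
  refine ⟨fun x hx => ?_, fun x => ⟨fun hx => ?_, fun ⟨n₀, hx, h⟩ => ?_⟩⟩
  · by_cases hzero : ∃ n, x n = 0
    · obtain ⟨n, hn⟩ := hzero
      exact lp.not_leftSymPt_of_apply_eq_zero hx hn
    · push Not at hzero
      exact lp.not_leftSymPt_of_three_apply_ne_zero (i := 0) (j := 1) (k := 2) (by norm_num)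
        (by norm_num) (by norm_num) (hzero 0) (hzero 1) (hzero 2)
  · obtain ⟨n₀, hn₀⟩ := lp.exists_forall_ne_eq_zero_of_rightSymPt hx
    exact ⟨n₀, hn₀, (lp.rightSymPt_iff_of_forall_ne_eq_zero hn₀).1 hx⟩
  · exact (lp.rightSymPt_iff_of_forall_ne_eq_zero hx).2 h
end
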